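/- arXiv:1911.02482 — 7 statements merged into one kernel-verified Lean document; each statement's English description precedes it below -/
import Mathlib

section
/- Let n ≥ 4, let V be an n-dimensional real vector space with a nondegenerate symmetric bilinear form h, let 𝒮 be an h-self-adjoint endomorphism of V which is not a scalar multiple of the identity, set S(X,Y) = h(X,𝒮Y) and R* = (1/2) S∧S. Then Weyl(R*) = 0 if and only if there exists ρ ∈ ℝ with rank(S − ρ·h) = 1 (i.e., the hypersurface is affine quasi-umbilical at the point). -/
namespace OVAff

variable {V : Type*} [AddCommGroup V] [Module ℝ V]

/-- Kulkarni–Nomizu product of two (0,2)-tensors. -/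
noncomputable def KN (E F : V → V → ℝ) : V → V → V → V → ℝ := fun X₁ X₂ X₃ X₄ =>
  E X₁ X₄ * F X₂ X₃ + E X₂ X₃ * F X₁ X₄ - E X₁ X₃ * F X₂ X₄ - E X₂ X₄ * F X₁ X₃

/-- Kulkarni–Nomizu product of a (0,2)-tensor with a (0,4)-tensor. -/
noncomputable def KN4 (E : V → V → ℝ) (T : V → V → V → V → ℝ) :
    V → V → V → V → V → V → ℝ := fun X₁ X₂ X₃ X₄ Y₁ Y₂ =>
  E X₁ X₄ * T X₂ X₃ Y₁ Y₂ + E X₂ X₃ * T X₁ X₄ Y₁ Y₂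
    - E X₁ X₃ * T X₂ X₄ Y₁ Y₂ - E X₂ X₄ * T X₁ X₃ Y₁ Y₂

/-- (X ∧_A Y) Z = A(Y,Z) X − A(X,Z) Y. -/
noncomputable def wedgeVec (A : V → V → ℝ) (X Y Z : V) : V := A Y Z • X - A X Z • Y

/-- Tachibana operator Q(A,T) on a (0,2)-tensor T. -/
noncomputable def Q2 (A T : V → V → ℝ) : V → V → V → V → ℝ :=
  fun X₁ X₂ X Y => -(T (wedgeVec A X Y X₁) X₂ + T X₁ (wedgeVec A X Y X₂))

/-- Tachibana operator Q(A,T) on a (0,4)-tensor T. -/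
noncomputable def Q4 (A : V → V → ℝ) (T : V → V → V → V → ℝ) :
    V → V → V → V → V → V → ℝ := fun X₁ X₂ X₃ X₄ X Y =>
  -(T (wedgeVec A X Y X₁) X₂ X₃ X₄ + T X₁ (wedgeVec A X Y X₂) X₃ X₄
    + T X₁ X₂ (wedgeVec A X Y X₃) X₄ + T X₁ X₂ X₃ (wedgeVec A X Y X₄))

/-- The derivation B·T of a curvature operator family ℬ (with h(ℬ(X,Y)Z,W)=B(X,Y,Z,W))
acting on a (0,2)-tensor T. -/
noncomputable def dot2 (ℬ : V → V → V → V) (T : V → V → ℝ) : V → V → V → V → ℝ :=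
  fun X₁ X₂ X Y => -(T (ℬ X Y X₁) X₂ + T X₁ (ℬ X Y X₂))

/-- The derivation B·T acting on a (0,4)-tensor T. -/
noncomputable def dot4 (ℬ : V → V → V → V) (T : V → V → V → V → ℝ) :
    V → V → V → V → V → V → ℝ := fun X₁ X₂ X₃ X₄ X Y =>
  -(T (ℬ X Y X₁) X₂ X₃ X₄ + T X₁ (ℬ X Y X₂) X₃ X₄
    + T X₁ X₂ (ℬ X Y X₃) X₄ + T X₁ X₂ X₃ (ℬ X Y X₄))

/-- Ricci contraction of a (0,4)-tensor with respect to an h-orthonormal basis `e`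
with signs `ε`. -/
noncomputable def ricci {n : ℕ} (ε : Fin n → ℝ) (e : Fin n → V)
    (B : V → V → V → V → ℝ) : V → V → ℝ :=
  fun X Y => ∑ j, ε j * B (e j) X Y (e j)

/-- Scalar curvature of a (0,4)-tensor. -/
noncomputable def scal {n : ℕ} (ε : Fin n → ℝ) (e : Fin n → V)
    (B : V → V → V → V → ℝ) : ℝ :=
  ∑ j, ε j * ricci ε e B (e j) (e j)

/-- Weyl tensor of a (0,4)-tensor with respect to the metric h. -/
noncomputable def weyl {n : ℕ} (h : V → V → ℝ) (ε : Fin n → ℝ) (e : Fin n → V)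
    (B : V → V → V → V → ℝ) : V → V → V → V → ℝ := fun X₁ X₂ X₃ X₄ =>
  B X₁ X₂ X₃ X₄ - (1 / ((n : ℝ) - 2)) * KN h (ricci ε e B) X₁ X₂ X₃ X₄
    + (scal ε e B / (2 * ((n : ℝ) - 2) * ((n : ℝ) - 1))) * KN h h X₁ X₂ X₃ X₄

/-!
If `Weyl(R*) = 0` then `R* = h ∧ P` with `P` the Schouten tensor of `R*`, and since
`Ric(R*) = h((tr 𝒮) 𝒮 - 𝒮², ·)`, `P = h(G ·, ·)` with `G = a 𝒮 - (n - 2)⁻¹ 𝒮² + c`.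
Absorbing the last slot of `½ S ∧ S = h ∧ P` by nondegeneracy gives an identity between vectors
that no longer involves `h`. Testing it against functionals that vanish on `u` and `𝒮 u`, for a
non-eigenvector `u`, shows that `𝒮² u ∈ span (u, 𝒮 u)` (otherwise `u, 𝒮 u, 𝒮² u` would span `V`)
and then that `𝒮 - ρ` maps `V` into `span (u, 𝒮 u)`. So the `ρ`-eigenspace has dimension at
least two, and two independent eigenvectors force `G = ρ 𝒮 - μ`. The identity then says that
`N = 𝒮 - ρ` satisfies `φ(N v) N u - φ(N u) N v = κ (φ(u) v - φ(v) u)`; an eigenvector kills `κ`,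
and `N` has rank one.

Conversely, if `S = ρ h + A` with `A` of rank one then `A ∧ A = 0`, so `R* = h ∧ (ρ²/2 h + ρ A)`,
and the Weyl tensor vanishes on every `h ∧ E`.
-/

section WedgeSquare

open Module Submodule

variable {K M : Type*} [Field K] [AddCommGroup M] [Module K M]

lemma exists_dual_eq_one_of_notMem {W : Submodule K M} {x : M} (hx : x ∉ W) :
    ∃ φ : Dual K M, (∀ w ∈ W, φ w = 0) ∧ φ x = 1 := by
  obtain ⟨f, hfx, hfW⟩ := W.exists_dual_map_eq_bot_of_notMem hx inferInstance
  refine ⟨(f x)⁻¹ • f, fun w hw => ?_, by simp [hfx]⟩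
  have : f w ∈ W.map f := mem_map_of_mem hw
  simp_all

/-- Vector form of `½ S ∧ S = h ∧ P` for `S = h(·, T ·)` and `P = h(G ·, ·)`: the fourth slot is
absorbed by nondegeneracy of `h`, and `φ` stands for `h z` with `z` the third slot. -/
def WedgeSqEq (T G : End K M) : Prop :=
  ∀ (φ : Dual K M) (u v : M),
    φ (T v) • T u - φ (T u) • T v = φ (G v) • u + φ v • G u - φ u • G v - φ (G u) • v

variable {T G : End K M}

lemma WedgeSqEq.apply_apply_mem_span [FiniteDimensional K M] (hM : 4 ≤ finrank K M)
    {a b c : K} (hb : b ≠ 0) (hTG : WedgeSqEq T (a • T + b • (T * T) + c • 1)) (u : M) :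
    T (T u) ∈ span K {u, T u} := by
  by_contra hx
  obtain ⟨φ, hφW, hφ⟩ := exists_dual_eq_one_of_notMem hx
  have hu : φ u = 0 := hφW _ (subset_span (by simp))
  have hTu : φ (T u) = 0 := hφW _ (subset_span (by simp))
  have hspan : ∀ v, v ∈ span K (Set.range ![u, T u, T (T u)]) := by
    intro v
    have hv := hTG φ u v
    simp only [LinearMap.add_apply, LinearMap.smul_apply, Module.End.mul_apply,
      Module.End.one_apply, map_add, map_smul, hu, hTu, hφ, smul_eq_mul] at hv
    refine (smul_mem_iff _ hb).1 <| (mem_span_range_iff_exists_fun K).2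
      ⟨![a * φ (T v) + b * φ (T (T v)) + c * φ v + φ v * c, φ v * a - φ (T v), φ v * b], ?_⟩
    simp only [Fin.sum_univ_three, Matrix.cons_val_zero, Matrix.cons_val_one,
      Matrix.cons_val_two, Matrix.head_cons, Matrix.tail_cons]
    linear_combination (norm := module) -hv
  have := finrank_range_le_card (R := K) ![u, T u, T (T u)]
  rw [Set.finrank, eq_top_iff'.2 hspan, finrank_top, Fintype.card_fin] at this
  omega

lemma WedgeSqEq.exists_range_le_span {a b c : K}
    (hTG : WedgeSqEq T (a • T + b • (T * T) + c • 1)) {u : M} (hu : T u ∉ span K {u})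
    (hTTu : T (T u) ∈ span K {u, T u}) :
    ∃ ρ : K, LinearMap.range (T - ρ • LinearMap.id) ≤ span K {u, T u} := by
  obtain ⟨p, q, hpq⟩ := mem_span_pair.1 hTTu
  obtain ⟨φ, hφW, hφ⟩ := exists_dual_eq_one_of_notMem hu
  have hφu : φ u = 0 := hφW u (mem_span_singleton_self u)
  refine ⟨a + b * q, ?_⟩
  rintro _ ⟨v, rfl⟩
  have hv := hTG φ u v
  simp only [LinearMap.add_apply, LinearMap.smul_apply, Module.End.mul_apply,
    Module.End.one_apply, map_add, map_smul, ← hpq, hφu, hφ, smul_eq_mul] at hv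
  refine mem_span_pair.2 ⟨-(a * φ (T v) + b * φ (T (T v)) + c * φ v) - φ v * (b * p + c),
    φ (T v) - φ v * (a + b * q), ?_⟩
  simp only [LinearMap.sub_apply, LinearMap.smul_apply, LinearMap.id_apply]
  linear_combination (norm := module) hv

lemma WedgeSqEq.mem_span_of_apply_eq_smul (hTG : WedgeSqEq T G) {u : M} (hu : u ≠ 0)
    {ρ μ : K} (hTu : T u = ρ • u) (hGu : G u = μ • u) (v : M) :
    G v + μ • v - ρ • T v ∈ span K {u} := by
  obtain ⟨φ, -, hφ⟩ := exists_dual_eq_one_of_notMem (W := ⊥) (mem_bot K |>.not.2 hu)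
  have hv := hTG φ u v
  simp only [hTu, hGu, map_smul, hφ, smul_eq_mul, mul_one] at hv
  refine mem_span_singleton.2 ⟨φ (G v) + μ * φ v - ρ * φ (T v), ?_⟩
  linear_combination (norm := module) -hv

lemma WedgeSqEq.eq_smul_sub_smul_one [FiniteDimensional K M] (hTG : WedgeSqEq T G) {ρ μ : K}
    (hker : 2 ≤ finrank K (LinearMap.ker (T - ρ • LinearMap.id)))
    (hG : ∀ u, T u = ρ • u → G u = μ • u) :
    G = ρ • T - μ • 1 := by
  have heigen : ∀ u ∈ LinearMap.ker (T - ρ • LinearMap.id), T u = ρ • u := fun u hu =>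
    sub_eq_zero.1 (by simpa using hu)
  obtain ⟨u₁, hu₁, hu₁0⟩ := (LinearMap.ker (T - ρ • LinearMap.id)).exists_mem_ne_zero_of_ne_bot
    (by rintro h; rw [h, finrank_bot] at hker; omega)
  have hnle : ¬LinearMap.ker (T - ρ • LinearMap.id) ≤ K ∙ u₁ := fun hle => by
    have := (Submodule.finrank_mono hle).trans_eq (finrank_span_singleton hu₁0)
    omega
  obtain ⟨u₂, hu₂, hu₂₁⟩ := SetLike.not_le_iff_exists.1 hnle
  have hu₂0 : u₂ ≠ 0 := by rintro rfl; exact hu₂₁ (zero_mem _)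
  ext v
  obtain ⟨s, hs⟩ := mem_span_singleton.1 <|
    hTG.mem_span_of_apply_eq_smul hu₁0 (heigen u₁ hu₁) (hG _ (heigen u₁ hu₁)) v
  obtain ⟨t, ht⟩ := mem_span_singleton.1 <|
    hTG.mem_span_of_apply_eq_smul hu₂0 (heigen u₂ hu₂) (hG _ (heigen u₂ hu₂)) v
  obtain rfl : t = 0 := by
    by_contra ht0
    refine hu₂₁ (mem_span_singleton.2 ⟨t⁻¹ * s, ?_⟩)
    rw [mul_smul, hs, ← ht, smul_smul, inv_mul_cancel₀ ht0, one_smul]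
  simp only [LinearMap.sub_apply, LinearMap.smul_apply, Module.End.one_apply]
  linear_combination (norm := module) -ht

lemma rank_eq_one_of_forall_dual [FiniteDimensional K M] (hM : 2 ≤ finrank K M)
    {N : End K M} (hN : N ≠ 0) (hker : LinearMap.ker N ≠ ⊥) {κ : K}
    (hNκ : ∀ (φ : Dual K M) (u v : M), φ (N v) • N u - φ (N u) • N v = κ • (φ u • v - φ v • u)) :
    LinearMap.rank N = 1 := by
  have hκ : κ = 0 := by
    obtain ⟨u₁, hu₁, hu₁0⟩ := (LinearMap.ker N).exists_mem_ne_zero_of_ne_bot hker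
    obtain ⟨φ, -, hφ⟩ := exists_dual_eq_one_of_notMem (W := ⊥) (mem_bot K |>.not.2 hu₁0)
    by_contra hκ
    refine absurd (finrank_le_one u₁ fun v => ⟨φ v, ?_⟩) (by omega)
    have hv := hNκ φ u₁ v
    simp only [LinearMap.mem_ker.1 hu₁, map_zero, zero_smul, smul_zero, sub_zero, hφ,
      one_smul] at hv
    exact (sub_eq_zero.1 ((smul_eq_zero.1 hv.symm).resolve_left hκ)).symm
  obtain ⟨v₁, hv₁⟩ : ∃ v₁, N v₁ ≠ 0 := by
    by_contra! h
    exact hN (LinearMap.ext h)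
  obtain ⟨φ, -, hφ⟩ := exists_dual_eq_one_of_notMem (W := ⊥) (mem_bot K |>.not.2 hv₁)
  refine rank_eq_one_iff.2 ⟨⟨N v₁, v₁, rfl⟩, fun h => hv₁ (congrArg Subtype.val h), ?_⟩
  rintro ⟨_, u, rfl⟩
  refine ⟨φ (N u), Subtype.ext ?_⟩
  have hu := hNκ φ u v₁
  rw [hκ, zero_smul, hφ, one_smul, sub_eq_zero] at hu
  exact hu.symm

theorem WedgeSqEq.exists_rank_sub_smul_id_eq_one [FiniteDimensional K M] (hM : 4 ≤ finrank K M)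
    (hT : ∀ c : K, T ≠ c • LinearMap.id) {a b c : K} (hb : b ≠ 0)
    (hTG : WedgeSqEq T (a • T + b • (T * T) + c • 1)) :
    ∃ ρ : K, LinearMap.rank (T - ρ • LinearMap.id) = 1 := by
  obtain ⟨u, hu⟩ : ∃ u, T u ∉ K ∙ u := by
    by_contra! h
    obtain ⟨c, rfl⟩ := LinearMap.exists_eq_smul_id_of_forall_notLinearIndependent fun v hv => by
      obtain ⟨s, hs⟩ := mem_span_singleton.1 (h v)
      simpa using (LinearIndependent.pair_iff.1 hv s (-1) (by rw [hs]; module)).2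
    exact hT c rfl
  obtain ⟨ρ, hρ⟩ := hTG.exists_range_le_span hu (hTG.apply_apply_mem_span hM hb u)
  have hker : 2 ≤ finrank K (LinearMap.ker (T - ρ • LinearMap.id)) := by
    classical
    have hrange := (Submodule.finrank_mono hρ).trans (finrank_span_le_card ({u, T u} : Set M))
    have := (T - ρ • LinearMap.id).finrank_range_add_finrank_ker
    have : ({u, T u} : Set M).toFinset.card ≤ 2 := by
      simpa using Finset.card_le_two (a := u) (b := T u)
    omega
  have hG := hTG.eq_smul_sub_smul_one hker (μ := a * ρ + b * ρ * ρ + c) fun v hv => by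
    simp only [LinearMap.add_apply, LinearMap.smul_apply, Module.End.mul_apply,
      Module.End.one_apply, hv, map_smul]
    module
  refine ⟨ρ, rank_eq_one_of_forall_dual (by omega) ?_ ?_ (κ := 2 * (a * ρ + b * ρ * ρ + c) - ρ * ρ)
    fun φ u v => ?_⟩
  · rw [Ne, sub_eq_zero]
    exact hT ρ
  · rintro h
    rw [h, finrank_bot] at hker
    omega
  · have h := hTG φ u v
    rw [hG] at h
    simp only [LinearMap.sub_apply, LinearMap.smul_apply, LinearMap.id_apply,
      Module.End.one_apply, map_sub, map_smul, smul_eq_mul] at h ⊢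
    linear_combination (norm := module) h

end WedgeSquare

noncomputable def schouten {n : ℕ} (h : V → V → ℝ) (ε : Fin n → ℝ) (e : Fin n → V)
    (B : V → V → V → V → ℝ) : V → V → ℝ := fun X Y =>
  (1 / ((n : ℝ) - 2)) * ricci ε e B X Y
    - scal ε e B / (2 * ((n : ℝ) - 2) * ((n : ℝ) - 1)) * h X Y

omit [AddCommGroup V] [Module ℝ V] in
lemma weyl_apply {n : ℕ} (h : V → V → ℝ) (ε : Fin n → ℝ) (e : Fin n → V)
    (B : V → V → V → V → ℝ) (X₁ X₂ X₃ X₄ : V) :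
    weyl h ε e B X₁ X₂ X₃ X₄ = B X₁ X₂ X₃ X₄ - KN h (schouten h ε e B) X₁ X₂ X₃ X₄ := by
  simp only [weyl, KN, schouten]
  ring

section Contraction

variable {n : ℕ} {h : LinearMap.BilinForm ℝ V} {e : Module.Basis (Fin n) ℝ V} {ε : Fin n → ℝ}
  (hε : ∀ j, ε j = 1 ∨ ε j = -1) (he : ∀ j k, h (e j) (e k) = if j = k then ε j else 0)
include hε he

lemma sum_smul_basis (x : V) :
    ∑ j, (ε j * h x (e j)) • e j = x := by
  have hrepr : ∀ j, h x (e j) = e.repr x j * ε j := fun j => by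
    conv_lhs => rw [← e.sum_repr x]
    rw [map_sum, LinearMap.sum_apply]
    simp [he]
  conv_rhs => rw [← e.sum_repr x]
  refine Finset.sum_congr rfl fun j _ => ?_
  rw [hrepr]
  rcases hε j with hj | hj <;> simp [hj]

lemma sum_mul_apply_basis (f : V →ₗ[ℝ] ℝ) (x : V) :
    ∑ j, ε j * h x (e j) * f (e j) = f x := by
  conv_rhs => rw [← sum_smul_basis hε he x]
  simp [map_sum]

lemma sum_apply_basis_self :
    ∑ j, ε j * h (e j) (e j) = n := by
  have : ∀ j, ε j * h (e j) (e j) = 1 := fun j => by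
    rcases hε j with hj | hj <;> simp [he, hj]
  simp [this]

lemma ricci_KN_left (hsymm : ∀ X Y, h X Y = h Y X) (E : LinearMap.BilinForm ℝ V)
    (X Y : V) :
    ricci ε e (KN (fun X Y => h X Y) (fun X Y => E X Y)) X Y
      = ((n : ℝ) - 2) * E X Y + (∑ j, ε j * E (e j) (e j)) * h X Y := by
  calc ricci ε e (KN (fun X Y => h X Y) (fun X Y => E X Y)) X Y
      = ∑ j, (E X Y * (ε j * h (e j) (e j)) + h X Y * (ε j * E (e j) (e j))
          - ε j * h Y (e j) * E X (e j) - ε j * h X (e j) * E.flip Y (e j)) :=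
        Finset.sum_congr rfl fun j _ => by
          simp only [KN, LinearMap.BilinForm.flip_apply, hsymm (e j) Y]
          ring
    _ = _ := by
      simp only [Finset.sum_sub_distrib, Finset.sum_add_distrib, ← Finset.mul_sum,
        sum_apply_basis_self hε he, sum_mul_apply_basis hε he]
      rw [LinearMap.BilinForm.flip_apply]
      ring

lemma schouten_KN_left (hn : 3 ≤ n) (hsymm : ∀ X Y, h X Y = h Y X)
    (E : LinearMap.BilinForm ℝ V) :
    schouten (fun X Y => h X Y) ε e (KN (fun X Y => h X Y) (fun X Y => E X Y))
      = fun X Y => E X Y := by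
  have hn3 : (3 : ℝ) ≤ n := by exact_mod_cast hn
  have hn2 : (n : ℝ) - 2 ≠ 0 := by linarith
  have hn1 : (n : ℝ) - 1 ≠ 0 := by linarith
  set trE := ∑ j, ε j * E (e j) (e j)
  have hscal : scal ε e (KN (fun X Y => h X Y) (fun X Y => E X Y)) = 2 * ((n : ℝ) - 1) * trE :=
    calc scal ε e (KN (fun X Y => h X Y) (fun X Y => E X Y))
        = ∑ j, (((n : ℝ) - 2) * (ε j * E (e j) (e j)) + trE * (ε j * h (e j) (e j))) :=
          Finset.sum_congr rfl fun j _ => by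
            rw [ricci_KN_left hε he hsymm]
            ring
      _ = _ := by
        rw [Finset.sum_add_distrib, ← Finset.mul_sum, ← Finset.mul_sum, sum_apply_basis_self hε he]
        ring
  funext X Y
  rw [schouten, ricci_KN_left hε he hsymm, hscal]
  field_simp
  ring

lemma weyl_KN_left_eq_zero (hn : 3 ≤ n) (hsymm : ∀ X Y, h X Y = h Y X)
    (E : LinearMap.BilinForm ℝ V) (X₁ X₂ X₃ X₄ : V) :
    weyl (fun X Y => h X Y) ε e (KN (fun X Y => h X Y) (fun X Y => E X Y)) X₁ X₂ X₃ X₄ = 0 := by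
  rw [weyl_apply, schouten_KN_left hε he hn hsymm, sub_self]

lemma ricci_half_KN_self {T : V →ₗ[ℝ] V}
    (hT : ∀ X Y, h (T X) Y = h X (T Y)) (X Y : V) :
    ricci ε e (fun X₁ X₂ X₃ X₄ => (1 / 2 : ℝ) *
        KN (fun X Y => h X (T Y)) (fun X Y => h X (T Y)) X₁ X₂ X₃ X₄) X Y
      = h (((∑ j, ε j * h (e j) (T (e j))) • T - T * T) X) Y :=
  calc ricci ε e (fun X₁ X₂ X₃ X₄ => (1 / 2 : ℝ) *
        KN (fun X Y => h X (T Y)) (fun X Y => h X (T Y)) X₁ X₂ X₃ X₄) X Y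
      = ∑ j, (h X (T Y) * (ε j * h (e j) (T (e j))) - ε j * h (T X) (e j) * h.flip (T Y) (e j)) :=
        Finset.sum_congr rfl fun j _ => by
          simp only [KN, LinearMap.BilinForm.flip_apply, ← hT X (e j)]
          ring
    _ = _ := by
      rw [Finset.sum_sub_distrib, ← Finset.mul_sum, sum_mul_apply_basis hε he]
      simp only [LinearMap.sub_apply, LinearMap.smul_apply, Module.End.mul_apply, map_sub,
        map_smul, LinearMap.BilinForm.flip_apply, hT, smul_eq_mul]
      ring

lemma schouten_half_KN_self {T : V →ₗ[ℝ] V}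
    (hT : ∀ X Y, h (T X) Y = h X (T Y)) :
    ∃ a c : ℝ, schouten (fun X Y => h X Y) ε e (fun X₁ X₂ X₃ X₄ => (1 / 2 : ℝ) *
        KN (fun X Y => h X (T Y)) (fun X Y => h X (T Y)) X₁ X₂ X₃ X₄)
      = fun X Y => h ((a • T + (-1 / ((n : ℝ) - 2)) • (T * T) + c • 1) X) Y := by
  refine ⟨(∑ j, ε j * h (e j) (T (e j))) / ((n : ℝ) - 2),
    -scal ε e (fun X₁ X₂ X₃ X₄ => (1 / 2 : ℝ) *
        KN (fun X Y => h X (T Y)) (fun X Y => h X (T Y)) X₁ X₂ X₃ X₄)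
      / (2 * ((n : ℝ) - 2) * ((n : ℝ) - 1)), ?_⟩
  funext X Y
  rw [schouten, ricci_half_KN_self hε he hT]
  simp only [LinearMap.add_apply, LinearMap.sub_apply, LinearMap.smul_apply, Module.End.one_apply,
    map_add, map_sub, map_smul, smul_eq_mul]
  ring

end Contraction

lemma wedgeSqEq_of_half_KN_self_eq [FiniteDimensional ℝ V] {h : LinearMap.BilinForm ℝ V}
    (hsymm : ∀ X Y, h X Y = h Y X) (hnd : h.SeparatingLeft) {T G : V →ₗ[ℝ] V}
    (hT : ∀ X Y, h (T X) Y = h X (T Y))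
    (hTG : ∀ X₁ X₂ X₃ X₄, (1 / 2 : ℝ) *
        KN (fun X Y => h X (T Y)) (fun X Y => h X (T Y)) X₁ X₂ X₃ X₄
      = KN (fun X Y => h X Y) (fun X Y => h (G X) Y) X₁ X₂ X₃ X₄) :
    WedgeSqEq T G := by
  have hsurj : Function.Surjective h :=
    (LinearMap.injective_iff_surjective_of_finrank_eq_finrank Subspace.dual_finrank_eq.symm).1 <|
      LinearMap.ker_eq_bot.1 (LinearMap.separatingLeft_iff_ker_eq_bot.1 hnd)
  intro φ u v
  obtain ⟨z, rfl⟩ := hsurj φ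
  rw [← sub_eq_zero]
  refine hnd _ fun y => ?_
  have := hTG u v z y
  simp only [KN, ← hT] at this
  simp only [map_sub, map_add, map_smul, LinearMap.sub_apply, LinearMap.add_apply,
    LinearMap.smul_apply, smul_eq_mul, hsymm z]
  linear_combination this

lemma KN_self_eq_zero_of_rank_eq_one (h : LinearMap.BilinForm ℝ V) {A : V →ₗ[ℝ] V}
    (hA : LinearMap.rank A = 1) :
    KN (fun X Y => h (A X) Y) (fun X Y => h (A X) Y) = 0 := by
  obtain ⟨w, -, hw⟩ := rank_eq_one_iff.1 hA
  choose ψ hψ using fun X => hw ⟨A X, X, rfl⟩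
  have hAX : ∀ X, A X = ψ X • (w : V) := fun X => (congrArg Subtype.val (hψ X)).symm
  funext X₁ X₂ X₃ X₄
  simp only [KN, hAX, map_smul, LinearMap.smul_apply, smul_eq_mul, Pi.zero_apply]
  ring

lemma half_KN_self_eq_KN_of_rank_eq_one {h : LinearMap.BilinForm ℝ V} {T A : V →ₗ[ℝ] V} {ρ : ℝ}
    (hTA : ∀ X Y, h (A X) Y = h X (T Y) - ρ * h X Y) (hA : LinearMap.rank A = 1) :
    (fun X₁ X₂ X₃ X₄ => (1 / 2 : ℝ) *
        KN (fun X Y => h X (T Y)) (fun X Y => h X (T Y)) X₁ X₂ X₃ X₄)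
      = KN (fun X Y => h X Y) (fun X Y => ((ρ ^ 2 / 2) • h + ρ • (h ∘ₗ A)) X Y) := by
  funext X₁ X₂ X₃ X₄
  have hAA := congrFun (congrFun (congrFun (congrFun
    (KN_self_eq_zero_of_rank_eq_one h hA) X₁) X₂) X₃) X₄
  have hT : ∀ X Y, h X (T Y) = ρ * h X Y + h (A X) Y := fun X Y => by rw [hTA]; ring
  simp only [KN, hT, LinearMap.add_apply, LinearMap.smul_apply, LinearMap.comp_apply,
    smul_eq_mul, Pi.zero_apply] at hAA ⊢
  linear_combination (1 / 2 : ℝ) * hAA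

/-- for n ≥ 4 and 𝒮 not proportional to the identity, Weyl(R*) = 0 iff the
hypersurface is affine quasi-umbilical at the point, i.e. rank(S − ρ·h) = 1 for some ρ. -/
theorem statement1
    {V : Type*} [AddCommGroup V] [Module ℝ V]
    (n : ℕ) (hn : 4 ≤ n)
    (h : LinearMap.BilinForm ℝ V)
    (hsymm : ∀ X Y, h X Y = h Y X)
    (hnd : ∀ X : V, (∀ Y, h X Y = 0) → X = 0)
    (e : Module.Basis (Fin n) ℝ V) (ε : Fin n → ℝ)
    (hε : ∀ j, ε j = 1 ∨ ε j = -1)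
    (he : ∀ j k, h (e j) (e k) = if j = k then ε j else 0)
    (𝒮 : V →ₗ[ℝ] V) (hsa : ∀ X Y, h (𝒮 X) Y = h X (𝒮 Y))
    (S : V → V → ℝ) (hS : S = fun X Y => h X (𝒮 Y))
    (Rstar : V → V → V → V → ℝ)
    (hRstar : Rstar = fun X₁ X₂ X₃ X₄ => (1 / 2 : ℝ) * KN S S X₁ X₂ X₃ X₄)
    (hnp : ∀ c : ℝ, 𝒮 ≠ c • (LinearMap.id : V →ₗ[ℝ] V)) :
    (∀ X₁ X₂ X₃ X₄, weyl (fun X Y => h X Y) ε (⇑e) Rstar X₁ X₂ X₃ X₄ = 0) ↔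
      ∃ ρ : ℝ, ∃ 𝒜 : V →ₗ[ℝ] V,
        (∀ X Y, h (𝒜 X) Y = S X Y - ρ * h X Y) ∧ LinearMap.rank 𝒜 = 1 := by
  subst hS hRstar
  have : FiniteDimensional ℝ V := Module.Finite.of_basis e
  have hdim : Module.finrank ℝ V = n := Module.finrank_eq_card_basis e |>.trans (Fintype.card_fin n)
  constructor
  · intro hW
    obtain ⟨a, c, hP⟩ := schouten_half_KN_self hε he hsa
    have hb : (-1 / ((n : ℝ) - 2)) ≠ 0 := by
      have : (4 : ℝ) ≤ n := by exact_mod_cast hn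
      exact div_ne_zero (by norm_num) (by linarith)
    have hTG := wedgeSqEq_of_half_KN_self_eq hsymm hnd hsa fun X₁ X₂ X₃ X₄ => by
      rw [← hP, ← sub_eq_zero]
      exact (weyl_apply _ _ _ _ _ _ _ _).symm.trans (hW X₁ X₂ X₃ X₄)
    obtain ⟨ρ, hρ⟩ := hTG.exists_rank_sub_smul_id_eq_one (hdim ▸ hn) hnp hb
    refine ⟨ρ, 𝒮 - ρ • LinearMap.id, fun X Y => ?_, hρ⟩
    simp [hsa]
  · rintro ⟨ρ, 𝒜, h𝒜, hrank⟩
    rw [half_KN_self_eq_KN_of_rank_eq_one h𝒜 hrank]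
    exact weyl_KN_left_eq_zero hε he (by omega) hsymm _

end OVAff
end

section
/- Let n ≥ 3, let V be an n-dimensional real vector space with a nondegenerate symmetric bilinear form h, let 𝒮 be an h-self-adjoint endomorphism of V, set S(X,Y) = h(X,𝒮Y) and R* = (1/2) S∧S. If S² + L₁·S + L·h = 0 for some real numbers L₁, L, then R*·R* = L·Q(h, R*). -/
namespace OVAff

variable {V : Type*} [AddCommGroup V] [Module ℝ V]

/-- if S² + L₁·S + L·h = 0 then R*·R* = L·Q(h,R*). -/
theorem statement2
    {V : Type*} [AddCommGroup V] [Module ℝ V]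
    (n : ℕ) (hn : 3 ≤ n)
    (h : LinearMap.BilinForm ℝ V)
    (hsymm : ∀ X Y, h X Y = h Y X)
    (hnd : ∀ X : V, (∀ Y, h X Y = 0) → X = 0)
    [FiniteDimensional ℝ V] (hdim : Module.finrank ℝ V = n)
    (𝒮 : V →ₗ[ℝ] V) (hsa : ∀ X Y, h (𝒮 X) Y = h X (𝒮 Y))
    (S : V → V → ℝ) (hS : S = fun X Y => h X (𝒮 Y))
    (Rstar : V → V → V → V → ℝ)
    (hRstar : Rstar = fun X₁ X₂ X₃ X₄ => (1 / 2 : ℝ) * KN S S X₁ X₂ X₃ X₄)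
    (ℬ : V → V → V → V)
    (hℬ : ∀ X Y Z W, h (ℬ X Y Z) W = Rstar X Y Z W)
    (L₁ L : ℝ)
    (hcond : ∀ X Y, h (𝒮 X) (𝒮 Y) + L₁ * S X Y + L * h X Y = 0) :
    ∀ X₁ X₂ X₃ X₄ X Y,
      dot4 ℬ Rstar X₁ X₂ X₃ X₄ X Y
        = L * Q4 (fun X Y => h X Y) Rstar X₁ X₂ X₃ X₄ X Y := by
  subst hS hRstar
  intro X₁ X₂ X₃ X₄ X Y
  have hSsym : ∀ a b : V, h a (𝒮 b) = h b (𝒮 a) := fun a b => by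
    rw [hsymm, hsa]
  have hSS : ∀ a b : V, h (𝒮 a) (𝒮 b) = -L₁ * h a (𝒮 b) - L * h a b := fun a b => by
    have := hcond a b; simp only at this; linarith
  have hSS' : ∀ a b : V, h a (𝒮 (𝒮 b)) = -L₁ * h a (𝒮 b) - L * h a b := fun a b => by
    rw [← hsa, hSS]
  have hB : ∀ A B C : V, ℬ A B C
      = 𝒮 ((fun X Y => h X (𝒮 Y)) B C • A - (fun X Y => h X (𝒮 Y)) A C • B) := by
    intro A B C
    have key : ∀ W, h (ℬ A B C - 𝒮 (h B (𝒮 C) • A - h A (𝒮 C) • B)) W = 0 := by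
      intro W
      have h1 : h (ℬ A B C) W = _ := hℬ A B C W
      simp only [map_sub, map_smul, LinearMap.sub_apply, LinearMap.smul_apply,
        smul_eq_mul, KN, h1, hsa] at *
      ring_nf
    have := hnd _ key
    have h2 : ℬ A B C = 𝒮 (h B (𝒮 C) • A - h A (𝒮 C) • B) := by
      have := sub_eq_zero.mp this; exact this
    simpa using h2
  simp only [dot4, Q4, hB, wedgeVec, KN, map_sub, map_smul, LinearMap.sub_apply,
    LinearMap.smul_apply, smul_eq_mul, hSS, hSS']
  simp only [(show h X₂ X₁ = h X₁ X₂ from hsymm _ _),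
    (show h X₂ (𝒮 X₁) = h X₁ (𝒮 X₂) from hSsym _ _),
    (show h X₃ X₁ = h X₁ X₃ from hsymm _ _),
    (show h X₃ (𝒮 X₁) = h X₁ (𝒮 X₃) from hSsym _ _),
    (show h X₃ X₂ = h X₂ X₃ from hsymm _ _),
    (show h X₃ (𝒮 X₂) = h X₂ (𝒮 X₃) from hSsym _ _),
    (show h X₄ X₁ = h X₁ X₄ from hsymm _ _),
    (show h X₄ (𝒮 X₁) = h X₁ (𝒮 X₄) from hSsym _ _),
    (show h X₄ X₂ = h X₂ X₄ from hsymm _ _),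
    (show h X₄ (𝒮 X₂) = h X₂ (𝒮 X₄) from hSsym _ _),
    (show h X₄ X₃ = h X₃ X₄ from hsymm _ _),
    (show h X₄ (𝒮 X₃) = h X₃ (𝒮 X₄) from hSsym _ _),
    (show h X X₁ = h X₁ X from hsymm _ _),
    (show h X (𝒮 X₁) = h X₁ (𝒮 X) from hSsym _ _),
    (show h X X₂ = h X₂ X from hsymm _ _),
    (show h X (𝒮 X₂) = h X₂ (𝒮 X) from hSsym _ _),
    (show h X X₃ = h X₃ X from hsymm _ _),
    (show h X (𝒮 X₃) = h X₃ (𝒮 X) from hSsym _ _),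
    (show h X X₄ = h X₄ X from hsymm _ _),
    (show h X (𝒮 X₄) = h X₄ (𝒮 X) from hSsym _ _),
    (show h Y X₁ = h X₁ Y from hsymm _ _),
    (show h Y (𝒮 X₁) = h X₁ (𝒮 Y) from hSsym _ _),
    (show h Y X₂ = h X₂ Y from hsymm _ _),
    (show h Y (𝒮 X₂) = h X₂ (𝒮 Y) from hSsym _ _),
    (show h Y X₃ = h X₃ Y from hsymm _ _),
    (show h Y (𝒮 X₃) = h X₃ (𝒮 Y) from hSsym _ _),
    (show h Y X₄ = h X₄ Y from hsymm _ _),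
    (show h Y (𝒮 X₄) = h X₄ (𝒮 Y) from hSsym _ _),
    (show h Y X = h X Y from hsymm _ _),
    (show h Y (𝒮 X) = h X (𝒮 Y) from hSsym _ _)]
  ring


end OVAff
end

section
/- Let n ≥ 4, let V be an n-dimensional real vector space with a positive definite symmetric bilinear form h (locally strongly convex case), let 𝒮 be an h-self-adjoint endomorphism whose spectrum consists of exactly two distinct eigenvalues λ₁ and λ₂ (the affine principal curvatures), S(X,Y) = h(X,𝒮Y), R* = (1/2) S∧S. Then R*·R* = λ₁λ₂·Q(h, R*). -/
/-!
Since `𝒮` is self-adjoint for the positive definite form `h`, it is diagonalizable, so its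
only two eigenvalues force `𝒮² = (λ₁ + λ₂) 𝒮 - λ₁ λ₂`. By nondegeneracy of `h`,
`ℬ(X,Y) Z = S(Y,Z) 𝒮X - S(X,Z) 𝒮Y`. Both `ℬ(X,Y)` and `X ∧_h Y` act on `R* = ½ S ∧ S` by the
Leibniz rule, so `R*·R* = (ℬ·S) ∧ S` and `Q(h,R*) = Q(h,S) ∧ S`, and it remains to see
`ℬ·S = λ₁ λ₂ Q(h,S)`: expanding with `𝒮²`, the `λ₁ + λ₂` part is `Q(S,S) = 0`.
-/

theorem LinearMap.IsSymmetric.apply_apply_eq_of_hasEigenvalue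
    {E : Type*} [NormedAddCommGroup E] [InnerProductSpace ℝ E] [FiniteDimensional ℝ E]
    {T : E →ₗ[ℝ] E} (hT : T.IsSymmetric) {a b : ℝ}
    (hab : ∀ t, Module.End.HasEigenvalue T t → t = a ∨ t = b) (x : E) :
    T (T x) = (a + b) • T x - (a * b) • x := by
  let e := hT.eigenvectorBasis rfl
  suffices T ∘ₗ T = (a + b) • T - (a * b) • LinearMap.id from LinearMap.congr_fun this x
  refine e.toBasis.ext fun i => ?_
  have hi := hT.apply_eigenvectorBasis rfl i
  simp only [LinearMap.comp_apply, LinearMap.sub_apply, LinearMap.smul_apply,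
    LinearMap.id_apply, OrthonormalBasis.coe_toBasis, e, hi, map_smul]
  rcases hab _ (hT.hasEigenvalue_eigenvalues rfl i) with ha | hb
  · rw [ha]; module
  · rw [hb]; module

namespace OVAff

variable {V : Type*}

theorem dot4_half_KN_self (ℬ : V → V → V → V) (T : V → V → ℝ) (X₁ X₂ X₃ X₄ X Y : V) :
    dot4 ℬ (fun X₁ X₂ X₃ X₄ => (1 / 2 : ℝ) * KN T T X₁ X₂ X₃ X₄) X₁ X₂ X₃ X₄ X Y
      = KN (fun A B => dot2 ℬ T A B X Y) T X₁ X₂ X₃ X₄ := by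
  simp only [dot4, dot2, KN]
  ring

theorem KN_smul_left (c : ℝ) (E F : V → V → ℝ) (X₁ X₂ X₃ X₄ : V) :
    KN (fun A B => c * E A B) F X₁ X₂ X₃ X₄ = c * KN E F X₁ X₂ X₃ X₄ := by
  simp only [KN]
  ring

variable [AddCommGroup V] [Module ℝ V]

theorem Q4_half_KN_self (A T : V → V → ℝ) (X₁ X₂ X₃ X₄ X Y : V) :
    Q4 A (fun X₁ X₂ X₃ X₄ => (1 / 2 : ℝ) * KN T T X₁ X₂ X₃ X₄) X₁ X₂ X₃ X₄ X Y
      = KN (fun B C => Q2 A T B C X Y) T X₁ X₂ X₃ X₄ :=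
  dot4_half_KN_self (wedgeVec A) T X₁ X₂ X₃ X₄ X Y

noncomputable abbrev innerProductCoreOfPosDef (h : LinearMap.BilinForm ℝ V)
    (hsymm : ∀ X Y, h X Y = h Y X) (hpos : ∀ X : V, X ≠ 0 → 0 < h X X) :
    InnerProductSpace.Core ℝ V where
  inner X Y := h X Y
  conj_inner_symm X Y := by simpa using hsymm Y X
  re_inner_nonneg X := by
    rcases eq_or_ne X 0 with rfl | hX
    · simp
    · simpa using (hpos X hX).le
  definite X hX := by
    by_contra hX0
    exact (hpos X hX0).ne' (by simpa using hX)
  add_left X Y Z := by simp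
  smul_left X Y r := by simp

theorem apply_apply_eq_of_isSymmetric_posDef [FiniteDimensional ℝ V]
    (h : LinearMap.BilinForm ℝ V) (hsymm : ∀ X Y, h X Y = h Y X)
    (hpos : ∀ X : V, X ≠ 0 → 0 < h X X)
    (𝒮 : V →ₗ[ℝ] V) (hsa : ∀ X Y, h (𝒮 X) Y = h X (𝒮 Y)) {a b : ℝ}
    (hab : ∀ t, Module.End.HasEigenvalue 𝒮 t → t = a ∨ t = b) (X : V) :
    𝒮 (𝒮 X) = (a + b) • 𝒮 X - (a * b) • X := by
  let core := innerProductCoreOfPosDef h hsymm hpos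
  let _ : NormedAddCommGroup V := core.toNormedAddCommGroup
  let _ : InnerProductSpace ℝ V := InnerProductSpace.ofCore core.toCore
  exact LinearMap.IsSymmetric.apply_apply_eq_of_hasEigenvalue (T := 𝒮) hsa hab X

theorem curvatureOperator_eq_smul_sub_smul (h : LinearMap.BilinForm ℝ V)
    (hnd : ∀ X : V, (∀ Y, h X Y = 0) → X = 0)
    (𝒮 : V →ₗ[ℝ] V) (hsa : ∀ X Y, h (𝒮 X) Y = h X (𝒮 Y)) (ℬ : V → V → V → V)
    (hℬ : ∀ X Y Z W, h (ℬ X Y Z) W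
      = (1 / 2 : ℝ) * KN (fun X Y => h X (𝒮 Y)) (fun X Y => h X (𝒮 Y)) X Y Z W)
    (X Y Z : V) : ℬ X Y Z = h Y (𝒮 Z) • 𝒮 X - h X (𝒮 Z) • 𝒮 Y := by
  have hinj : Function.Injective h :=
    LinearMap.ker_eq_bot.mp (LinearMap.separatingLeft_iff_ker_eq_bot.mp hnd)
  refine hinj (LinearMap.ext fun W => ?_)
  simp only [hℬ, KN, map_sub, map_smul, LinearMap.sub_apply, LinearMap.smul_apply,
    smul_eq_mul, hsa]
  ring

theorem dot2_eq_smul_Q2 (h : LinearMap.BilinForm ℝ V) (hsymm : ∀ X Y, h X Y = h Y X)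
    (𝒮 : V →ₗ[ℝ] V) (hsa : ∀ X Y, h (𝒮 X) Y = h X (𝒮 Y)) {a b : ℝ}
    (h𝒮 : ∀ X, 𝒮 (𝒮 X) = (a + b) • 𝒮 X - (a * b) • X) (ℬ : V → V → V → V)
    (hℬ : ∀ X Y Z, ℬ X Y Z = h Y (𝒮 Z) • 𝒮 X - h X (𝒮 Z) • 𝒮 Y) (Z W X Y : V) :
    dot2 ℬ (fun X Y => h X (𝒮 Y)) Z W X Y
      = (a * b) * Q2 (fun X Y => h X Y) (fun X Y => h X (𝒮 Y)) Z W X Y := by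
  simp only [dot2, Q2, wedgeVec, hℬ, map_sub, map_smul, LinearMap.sub_apply,
    LinearMap.smul_apply, smul_eq_mul, ← hsa, h𝒮]
  have hS : ∀ u v, h (𝒮 u) v = h (𝒮 v) u := fun u v => (hsa u v).trans (hsymm _ _)
  rw [hS Z X, hS Z Y, hsymm Z X, hsymm Z Y]
  ring

theorem statement7_general
    {V : Type*} [AddCommGroup V] [Module ℝ V]
    (h : LinearMap.BilinForm ℝ V)
    (hsymm : ∀ X Y, h X Y = h Y X)
    (hnd : ∀ X : V, (∀ Y, h X Y = 0) → X = 0)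
    [FiniteDimensional ℝ V]
    (hpos : ∀ X : V, X ≠ 0 → 0 < h X X)
    (𝒮 : V →ₗ[ℝ] V) (hsa : ∀ X Y, h (𝒮 X) Y = h X (𝒮 Y))
    (S : V → V → ℝ) (hS : S = fun X Y => h X (𝒮 Y))
    (Rstar : V → V → V → V → ℝ)
    (hRstar : Rstar = fun X₁ X₂ X₃ X₄ => (1 / 2 : ℝ) * KN S S X₁ X₂ X₃ X₄)
    (ℬ : V → V → V → V)
    (hℬ : ∀ X Y Z W, h (ℬ X Y Z) W = Rstar X Y Z W)
    (l₁ l₂ : ℝ)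
    (heig : ∀ t : ℝ, Module.End.HasEigenvalue 𝒮 t ↔ t = l₁ ∨ t = l₂) :
    ∀ X₁ X₂ X₃ X₄ X Y,
      dot4 ℬ Rstar X₁ X₂ X₃ X₄ X Y
        = (l₁ * l₂) * Q4 (fun X Y => h X Y) Rstar X₁ X₂ X₃ X₄ X Y := by
  intro X₁ X₂ X₃ X₄ X Y
  subst hS hRstar
  have h𝒮 := apply_apply_eq_of_isSymmetric_posDef h hsymm hpos 𝒮 hsa fun t => (heig t).mp
  have hℬ_apply := curvatureOperator_eq_smul_sub_smul h hnd 𝒮 hsa ℬ hℬ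
  rw [dot4_half_KN_self, Q4_half_KN_self, ← KN_smul_left]
  congr 1
  funext A B
  exact dot2_eq_smul_Q2 h hsymm 𝒮 hsa h𝒮 ℬ hℬ_apply A B X Y

/-- locally strongly convex case with exactly two distinct affine principal
curvatures λ₁, λ₂: then R*·R* = λ₁λ₂·Q(h,R*). -/
theorem statement7
    {V : Type*} [AddCommGroup V] [Module ℝ V]
    (n : ℕ) (hn : 4 ≤ n)
    (h : LinearMap.BilinForm ℝ V)
    (hsymm : ∀ X Y, h X Y = h Y X)
    (hnd : ∀ X : V, (∀ Y, h X Y = 0) → X = 0)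
    [FiniteDimensional ℝ V] (hdim : Module.finrank ℝ V = n)
    (hpos : ∀ X : V, X ≠ 0 → 0 < h X X)
    (𝒮 : V →ₗ[ℝ] V) (hsa : ∀ X Y, h (𝒮 X) Y = h X (𝒮 Y))
    (S : V → V → ℝ) (hS : S = fun X Y => h X (𝒮 Y))
    (Rstar : V → V → V → V → ℝ)
    (hRstar : Rstar = fun X₁ X₂ X₃ X₄ => (1 / 2 : ℝ) * KN S S X₁ X₂ X₃ X₄)
    (ℬ : V → V → V → V)
    (hℬ : ∀ X Y Z W, h (ℬ X Y Z) W = Rstar X Y Z W)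
    (l₁ l₂ : ℝ) (hne : l₁ ≠ l₂)
    (heig : ∀ t : ℝ, Module.End.HasEigenvalue 𝒮 t ↔ t = l₁ ∨ t = l₂) :
    ∀ X₁ X₂ X₃ X₄ X Y,
      dot4 ℬ Rstar X₁ X₂ X₃ X₄ X Y
        = (l₁ * l₂) * Q4 (fun X Y => h X Y) Rstar X₁ X₂ X₃ X₄ X Y :=
  statement7_general h hsymm hnd hpos 𝒮 hsa S hS Rstar hRstar ℬ hℬ l₁ l₂ heig

end OVAff
end

section
/- Let n ≥ 4, let V be an n-dimensional real vector space with a nondegenerate symmetric bilinear form h, let 𝒮 be an h-self-adjoint endomorphism, S(X,Y) = h(X,𝒮Y), R* = (1/2) S∧S, and assume rank(S − ρ·h) = 2 for some ρ ∈ ℝ (affine 2-quasi-umbilical point). Set A = S − ρ·h, α₂ = ρ(tr(A) + (n−1)ρ), and τ = (1/2)((tr A)² − tr(A²)) + (n−2)ρ(tr A + (n−2)ρ). If τ = 0, then rank(Ric(R*) − α₂·h) ≤ 1. -/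
namespace OVAff

variable {V : Type*} [AddCommGroup V] [Module ℝ V]

/-! With `𝒮 = 𝒜 + ρ`, the Ricci tensor of `S ∧ S / 2` is `h((tr 𝒮 · 𝒮 - 𝒮²)·, ·)`, so
`Ric(R*) - α₂ h` is represented by `(λ - 𝒜) 𝒜` with `λ = tr 𝒜 + (n - 2) ρ`. On the plane
`range 𝒜` the characteristic polynomial of `𝒜` takes the value `τ = 0` at `λ`, so `λ - 𝒜` has
a kernel there and `(λ - 𝒜) 𝒜` has rank at most one. -/

open Module LinearMap

def IsSignedOrthonormalBasis {n : ℕ} (h : LinearMap.BilinForm ℝ V) (e : Basis (Fin n) ℝ V)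
    (ε : Fin n → ℝ) : Prop :=
  (∀ j, ε j = 1 ∨ ε j = -1) ∧ ∀ j k, h (e j) (e k) = if j = k then ε j else 0

namespace IsSignedOrthonormalBasis

variable {n : ℕ} {h : LinearMap.BilinForm ℝ V} {e : Basis (Fin n) ℝ V} {ε : Fin n → ℝ}

lemma repr_apply (he : IsSignedOrthonormalBasis h e ε) (Z : V) (j : Fin n) :
    e.repr Z j = ε j * h Z (e j) := by
  have hεj : ε j * ε j = 1 := by rcases he.1 j with hj | hj <;> norm_num [hj]
  have hcoord : e.coord j = ε j • h.flip (e j) := e.ext fun k => by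
    by_cases hkj : k = j
    · simp [hkj, he.2, hεj]
    · simp [he.2, hkj]
  exact LinearMap.congr_fun hcoord Z

lemma ext_basis (he : IsSignedOrthonormalBasis h e ε) {X Y : V}
    (hXY : ∀ j, h X (e j) = h Y (e j)) : X = Y :=
  e.ext_elem fun j => by rw [he.repr_apply, he.repr_apply, hXY]

lemma apply_eq_sum (he : IsSignedOrthonormalBasis h e ε) (F : V →ₗ[ℝ] V) (Z Y : V) :
    h (F Z) Y = ∑ j, ε j * h Z (e j) * h (F (e j)) Y := by
  conv_lhs => rw [← e.sum_repr Z]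
  simp [map_sum, he.repr_apply]

lemma trace_eq_sum (he : IsSignedOrthonormalBasis h e ε) (F : V →ₗ[ℝ] V) :
    trace ℝ V F = ∑ j, ε j * h (F (e j)) (e j) := by
  simp [trace_eq_matrix_trace ℝ e F, Matrix.trace, toMatrix_apply, he.repr_apply]

lemma ricci_half_KN_self (he : IsSignedOrthonormalBasis h e ε) (T : V →ₗ[ℝ] V)
    {S : V → V → ℝ} (hS : ∀ X Y, S X Y = h (T X) Y) (X Y : V) :
    ricci ε e (fun X₁ X₂ X₃ X₄ => (1 / 2 : ℝ) * KN S S X₁ X₂ X₃ X₄) X Y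
      = trace ℝ V T * h (T X) Y - h (T (T X)) Y := by
  rw [he.trace_eq_sum, he.apply_eq_sum T (T X) Y, Finset.sum_mul, ← Finset.sum_sub_distrib]
  refine Finset.sum_congr rfl fun j _ => ?_
  simp only [KN, hS]
  ring

lemma ricci_half_KN_sub_smul (he : IsSignedOrthonormalBasis h e ε) (ρ : ℝ) (𝒜 : V →ₗ[ℝ] V)
    {S : V → V → ℝ} (hS : ∀ X Y, h (𝒜 X) Y = S X Y - ρ * h X Y) (X Y : V) :
    ricci ε e (fun X₁ X₂ X₃ X₄ => (1 / 2 : ℝ) * KN S S X₁ X₂ X₃ X₄) X Y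
        - ρ * (trace ℝ V 𝒜 + ((n : ℝ) - 1) * ρ) * h X Y
      = h ((((trace ℝ V 𝒜 + ((n : ℝ) - 2) * ρ) • LinearMap.id - 𝒜 : V →ₗ[ℝ] V)) (𝒜 X)) Y := by
  have : Module.Finite ℝ V := Module.Finite.of_basis e
  have hS' : ∀ X Y, S X Y = h ((𝒜 + ρ • LinearMap.id : V →ₗ[ℝ] V) X) Y := fun X Y => by
    simp [hS]
  have htr : trace ℝ V (𝒜 + ρ • LinearMap.id : V →ₗ[ℝ] V) = trace ℝ V 𝒜 + n * ρ := by
    simp [trace_id, finrank_eq_card_basis e, mul_comm]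
  rw [he.ricci_half_KN_self _ hS', htr]
  simp only [LinearMap.add_apply, LinearMap.smul_apply, id_coe, id_eq, map_add, map_smul,
    smul_eq_mul, smul_add, LinearMap.sub_apply, map_sub]
  ring

end IsSignedOrthonormalBasis

lemma det_smul_id_sub_of_finrank_eq_two [FiniteDimensional ℝ V] (h2 : finrank ℝ V = 2)
    (B : V →ₗ[ℝ] V) (x : ℝ) :
    LinearMap.det (x • LinearMap.id - B)
      = x ^ 2 - trace ℝ V B * x + (1 / 2) * (trace ℝ V B ^ 2 - trace ℝ V (B ∘ₗ B)) := by
  let b : Basis (Fin 2) ℝ V := finBasisOfFinrankEq ℝ V h2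
  rw [← LinearMap.det_toMatrix b, trace_eq_matrix_trace ℝ b B, trace_eq_matrix_trace ℝ b (B ∘ₗ B),
    map_sub, map_smul, toMatrix_id, toMatrix_comp b b b B B]
  simp only [Matrix.det_fin_two, Matrix.trace_fin_two, Matrix.mul_apply, Fin.sum_univ_two,
    Matrix.sub_apply, Matrix.smul_apply, Matrix.one_apply_eq, Matrix.one_apply_ne zero_ne_one,
    Matrix.one_apply_ne one_ne_zero, smul_eq_mul]
  ring

lemma rank_smul_id_sub_comp_le_one [FiniteDimensional ℝ V] (𝒜 : V →ₗ[ℝ] V)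
    (hrank : LinearMap.rank 𝒜 = 2) (μ : ℝ)
    (hμ : μ ^ 2 - trace ℝ V 𝒜 * μ + (1 / 2) * (trace ℝ V 𝒜 ^ 2 - trace ℝ V (𝒜 ∘ₗ 𝒜)) = 0) :
    LinearMap.rank ((μ • LinearMap.id - 𝒜) ∘ₗ 𝒜) ≤ 1 := by
  set U := range 𝒜
  let B : U →ₗ[ℝ] U := 𝒜.restrict fun x _ => mem_range_self 𝒜 x
  have hU : finrank ℝ U = 2 := finrank_eq_of_rank_eq hrank
  have htr : trace ℝ U B = trace ℝ V 𝒜 :=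
    trace_restrict_eq_of_forall_mem U 𝒜 (mem_range_self 𝒜)
  have htr2 : trace ℝ U (B ∘ₗ B) = trace ℝ V (𝒜 ∘ₗ 𝒜) := by
    have : B ∘ₗ B = (𝒜 ∘ₗ 𝒜).restrict fun x _ => mem_range_self 𝒜 (𝒜 x) := by ext; rfl
    rw [this, trace_restrict_eq_of_forall_mem U _ fun x => mem_range_self 𝒜 (𝒜 x)]
  have hdet : LinearMap.det (μ • LinearMap.id - B) = 0 := by
    rw [det_smul_id_sub_of_finrank_eq_two hU, htr, htr2, hμ]
  have hlt : finrank ℝ (range (μ • LinearMap.id - B)) < 2 :=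
    hU ▸ Submodule.finrank_lt (range_lt_top_of_det_eq_zero hdet).ne
  have hfac : (μ • LinearMap.id - 𝒜) ∘ₗ 𝒜
      = U.subtype ∘ₗ (μ • LinearMap.id - B) ∘ₗ 𝒜.rangeRestrict := by
    ext; rfl
  calc LinearMap.rank ((μ • LinearMap.id - 𝒜) ∘ₗ 𝒜)
      = LinearMap.rank (U.subtype ∘ₗ (μ • LinearMap.id - B) ∘ₗ 𝒜.rangeRestrict) := by rw [hfac]
    _ ≤ LinearMap.rank ((μ • LinearMap.id - B) ∘ₗ 𝒜.rangeRestrict) := rank_comp_le_right _ _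
    _ ≤ LinearMap.rank (μ • LinearMap.id - B) := rank_comp_le_left _ _
    _ = finrank ℝ (range (μ • LinearMap.id - B)) := (finrank_eq_rank ℝ _).symm
    _ ≤ 1 := by exact_mod_cast Nat.le_of_lt_succ hlt

theorem statement9_general
    {V : Type*} [AddCommGroup V] [Module ℝ V]
    (n : ℕ)
    (h : LinearMap.BilinForm ℝ V)
    (e : Module.Basis (Fin n) ℝ V) (ε : Fin n → ℝ)
    (hε : ∀ j, ε j = 1 ∨ ε j = -1)
    (he : ∀ j k, h (e j) (e k) = if j = k then ε j else 0)
    (S : V → V → ℝ)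
    (Rstar : V → V → V → V → ℝ)
    (hRstar : Rstar = fun X₁ X₂ X₃ X₄ => (1 / 2 : ℝ) * KN S S X₁ X₂ X₃ X₄)
    (ρ : ℝ) (𝒜 : V →ₗ[ℝ] V)
    (h𝒜 : ∀ X Y, h (𝒜 X) Y = S X Y - ρ * h X Y)
    (hrank : LinearMap.rank 𝒜 = 2)
    (α₂ τ : ℝ)
    (hα₂ : α₂ = ρ * (LinearMap.trace ℝ V 𝒜 + ((n : ℝ) - 1) * ρ))
    (hτ : τ = (1 / 2 : ℝ) * ((LinearMap.trace ℝ V 𝒜) ^ 2 - LinearMap.trace ℝ V (𝒜 ∘ₗ 𝒜))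
      + ((n : ℝ) - 2) * ρ * (LinearMap.trace ℝ V 𝒜 + ((n : ℝ) - 2) * ρ))
    (hτ0 : τ = 0) :
    ∀ 𝒞 : V →ₗ[ℝ] V,
      (∀ X Y, h (𝒞 X) Y = ricci ε (⇑e) Rstar X Y - α₂ * h X Y) →
        LinearMap.rank 𝒞 ≤ 1 := by
  intro 𝒞 h𝒞
  have : FiniteDimensional ℝ V := Module.Finite.of_basis e
  have hb : IsSignedOrthonormalBasis h e ε := ⟨hε, he⟩
  have h𝒞eq : 𝒞 = ((LinearMap.trace ℝ V 𝒜 + ((n : ℝ) - 2) * ρ) • LinearMap.id - 𝒜) ∘ₗ 𝒜 := by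
    ext X
    refine hb.ext_basis fun j => ?_
    rw [h𝒞, hRstar, hα₂]
    exact hb.ricci_half_KN_sub_smul ρ 𝒜 h𝒜 X (e j)
  rw [h𝒞eq]
  refine rank_smul_id_sub_comp_le_one 𝒜 hrank _ ?_
  rw [hτ0] at hτ
  linear_combination -hτ

/-- at an affine 2-quasi-umbilical point with τ = 0 one has
rank(Ric(R*) − α₂·h) ≤ 1. -/
theorem statement9
    {V : Type*} [AddCommGroup V] [Module ℝ V]
    (n : ℕ) (hn : 4 ≤ n)
    (h : LinearMap.BilinForm ℝ V)
    (hsymm : ∀ X Y, h X Y = h Y X)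
    (hnd : ∀ X : V, (∀ Y, h X Y = 0) → X = 0)
    (e : Module.Basis (Fin n) ℝ V) (ε : Fin n → ℝ)
    (hε : ∀ j, ε j = 1 ∨ ε j = -1)
    (he : ∀ j k, h (e j) (e k) = if j = k then ε j else 0)
    (𝒮 : V →ₗ[ℝ] V) (hsa : ∀ X Y, h (𝒮 X) Y = h X (𝒮 Y))
    (S : V → V → ℝ) (hS : S = fun X Y => h X (𝒮 Y))
    (Rstar : V → V → V → V → ℝ)
    (hRstar : Rstar = fun X₁ X₂ X₃ X₄ => (1 / 2 : ℝ) * KN S S X₁ X₂ X₃ X₄)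
    (ρ : ℝ) (𝒜 : V →ₗ[ℝ] V)
    (h𝒜 : ∀ X Y, h (𝒜 X) Y = S X Y - ρ * h X Y)
    (hrank : LinearMap.rank 𝒜 = 2)
    (α₂ τ : ℝ)
    (hα₂ : α₂ = ρ * (LinearMap.trace ℝ V 𝒜 + ((n : ℝ) - 1) * ρ))
    (hτ : τ = (1 / 2 : ℝ) * ((LinearMap.trace ℝ V 𝒜) ^ 2 - LinearMap.trace ℝ V (𝒜 ∘ₗ 𝒜))
      + ((n : ℝ) - 2) * ρ * (LinearMap.trace ℝ V 𝒜 + ((n : ℝ) - 2) * ρ))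
    (hτ0 : τ = 0) :
    ∀ 𝒞 : V →ₗ[ℝ] V,
      (∀ X Y, h (𝒞 X) Y = ricci ε (⇑e) Rstar X Y - α₂ * h X Y) →
        LinearMap.rank 𝒞 ≤ 1 :=
  statement9_general n h e ε hε he S Rstar hRstar ρ 𝒜 h𝒜 hrank α₂ τ hα₂ hτ hτ0

end OVAff
end

section
/- Let n ≥ 3, let V be an n-dimensional real vector space with a positive definite symmetric bilinear form g, let H be a symmetric bilinear form on V whose g-associated endomorphism has exactly three distinct eigenvalues λ₀, λ₁, λ₂ of multiplicities 1, n₁, n₂ (the principal curvatures of a hypersurface in a Riemannian space form N^{n+1}(c)), let c ∈ ℝ, and let R = (1/2)·H∧H + (c/2)·g∧g (the Gauss equation), S = Ric(R). Set α = λ₀+λ₁+λ₂, β = −λ₀(λ₁+λ₂) − λ₁λ₂, γ = λ₀λ₁λ₂, A = S² + ((α − tr(H))² + β − 2(n−1)c)·S + ((n−1)²c² − (β + (α − tr(H))²)(n−1)c − γ(α − 2·tr(H)))·g, and μ = γ + (α − tr(H))(β + tr(H)(α − tr(H))). Then A = μ·H, and μ = (λ₀ + (n₁−1)λ₁ + (n₂−1)λ₂)·(λ₁λ₂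 + (n₁λ₁ + n₂λ₂)((n₁−1)λ₁ + (n₂−1)λ₂)). Moreover: (i) if μ = 0 then S² is a linear combination of S and g (partially Einstein point); (ii) if μ ≠ 0 then R = (1/(2μ²))·A∧A + (c/2)·g∧g. -/
/-!
By the Gauss equation the Ricci operator is `𝒟 = tr(ℋ) ℋ - ℋ² + (n - 1) c`. The shape operator `ℋ`
is self-adjoint for the positive definite `g`, hence diagonalizable, so it is annihilated by
`(X - λ₀)(X - λ₁)(X - λ₂) = X³ - α X² - β X - γ` and `tr ℋ = λ₀ + n₁ λ₁ + n₂ λ₂`. Reducing the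
operator `𝒟² + p 𝒟 + q` of `A`, a quartic in `ℋ`, modulo this cubic leaves exactly `μ ℋ`.
If `μ = 0` this is the partially Einstein relation; otherwise `H = A / μ` substituted into the Gauss
equation gives the expression of `R` through `A`.
-/

namespace OVAff

variable {V : Type*} [AddCommGroup V] [Module ℝ V]

open Polynomial Module.End

section SpectralFacts

variable {K W : Type*} [Field K] [AddCommGroup W] [Module K W] {f : Module.End K W}

theorem aeval_eq_zero_of_iSup_eigenspace_eq_top (hf : ⨆ μ, f.eigenspace μ = ⊤) {p : K[X]}
    (hp : ∀ μ, f.HasEigenvalue μ → p.IsRoot μ) : aeval f p = 0 := by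
  ext v
  have hv : v ∈ ⨆ μ, f.eigenspace μ := hf ▸ Submodule.mem_top
  induction hv using Submodule.iSup_induction' with
  | mem μ w hw =>
    rcases eq_or_ne w 0 with rfl | hw0
    · simp
    · rw [aeval_apply_of_hasEigenvector ⟨hw, hw0⟩,
        (hp μ (hasEigenvalue_of_hasEigenvector ⟨hw, hw0⟩)).eq_zero, zero_smul,
        LinearMap.zero_apply]
  | zero => simp
  | add x y _ _ hx hy => simp only [map_add, hx, hy, LinearMap.zero_apply, add_zero]

theorem trace_eq_sum_mul_finrank_eigenspace [FiniteDimensional K W]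
    (hf : ⨆ μ, f.eigenspace μ = ⊤) (s : Finset K) (hs : ∀ μ, f.HasEigenvalue μ ↔ μ ∈ s) :
    LinearMap.trace K W f = ∑ μ ∈ s, μ * Module.finrank K (f.eigenspace μ) := by
  classical
  have hint := DirectSum.isInternal_submodule_of_iSupIndep_of_iSup_eq_top
    f.eigenspaces_iSupIndep hf
  have hfin : {μ | f.eigenspace μ ≠ ⊥}.Finite := s.finite_toSet.subset fun μ hμ => (hs μ).1 hμ
  have hmaps : ∀ μ, Set.MapsTo f (f.eigenspace μ) (f.eigenspace μ) := fun μ =>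
    mapsTo_genEigenspace_of_comm (Commute.refl f) μ 1
  rw [LinearMap.trace_eq_sum_trace_restrict' hint hfin hmaps,
    show hfin.toFinset = s from Finset.ext fun μ => by simpa [hasEigenvalue_iff] using hs μ]
  refine Finset.sum_congr rfl fun μ _ => ?_
  have : f.restrict (hmaps μ) = μ • LinearMap.id :=
    LinearMap.ext fun v => Subtype.ext (mem_eigenspace_iff.mp v.2)
  rw [this, map_smul, LinearMap.trace_id, smul_eq_mul]

end SpectralFacts

section PositiveDefinite

variable (g : LinearMap.BilinForm ℝ V) (hpos : ∀ X : V, X ≠ 0 → 0 < g X X)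
include hpos

theorem ext_of_forall_apply_eq {f f' : V →ₗ[ℝ] V} (h : ∀ X Y, g (f X) Y = g (f' X) Y) :
    f = f' := by
  ext X
  by_contra hne
  have := hpos _ (sub_ne_zero.mpr hne)
  rw [LinearMap.map_sub₂, h, sub_self] at this
  exact this.false

theorem iSup_eigenspace_eq_top_of_isSymmetric [FiniteDimensional ℝ V]
    (hsymm : ∀ X Y, g X Y = g Y X) (ℋ : V →ₗ[ℝ] V) (hsa : ∀ X Y, g (ℋ X) Y = g X (ℋ Y)) :
    ⨆ μ, Module.End.eigenspace ℋ μ = ⊤ := by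
  let core : InnerProductSpace.Core ℝ V :=
    { inner := fun X Y => g X Y
      conj_inner_symm := fun X Y => by simpa using hsymm Y X
      re_inner_nonneg := fun X => by
        rcases eq_or_ne X 0 with rfl | hX
        · simp
        · simpa using (hpos X hX).le
      add_left := fun X Y Z => by simp
      smul_left := fun X Y r => by simp
      definite := fun X hX => by_contra fun h => (hpos X h).ne' hX }
  let _ : NormedAddCommGroup V := core.toNormedAddCommGroup
  let _ : InnerProductSpace ℝ V := InnerProductSpace.ofCore core.toCore
  have hℋ : LinearMap.IsSymmetric ℋ := hsa
  exact Submodule.orthogonal_eq_bot_iff.mp hℋ.orthogonalComplement_iSup_eigenspaces_eq_bot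

end PositiveDefinite

section OrthonormalBasis

variable {n : ℕ} (g : LinearMap.BilinForm ℝ V) (e : Module.Basis (Fin n) ℝ V)
  (he : ∀ j k, g (e j) (e k) = if j = k then (1 : ℝ) else 0)
include he

theorem repr_eq_of_orthonormal (W : V) (j : Fin n) : e.repr W j = g W (e j) := by
  conv_rhs => rw [← e.sum_repr W]
  rw [map_sum, LinearMap.sum_apply]
  simp [he]

theorem sum_mul_eq_of_orthonormal (W Y : V) : ∑ j, g W (e j) * g (e j) Y = g W Y := by
  conv_rhs => rw [← e.sum_repr W]
  simp [map_sum, repr_eq_of_orthonormal g e he]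

theorem trace_eq_sum_of_orthonormal (f : V →ₗ[ℝ] V) :
    LinearMap.trace ℝ V f = ∑ j, g (f (e j)) (e j) := by
  simp [LinearMap.trace_eq_matrix_trace ℝ e f, Matrix.trace, LinearMap.toMatrix_apply,
    repr_eq_of_orthonormal g e he]

theorem ricci_gauss_eq (ℋ : V →ₗ[ℝ] V) (hsa : ∀ X Y, g (ℋ X) Y = g X (ℋ Y)) (c : ℝ) (X Y : V) :
    ricci (fun _ => (1 : ℝ)) e (fun X₁ X₂ X₃ X₄ =>
        (1 / 2 : ℝ) * KN (fun X Y => g (ℋ X) Y) (fun X Y => g (ℋ X) Y) X₁ X₂ X₃ X₄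
          + (c / 2) * KN (fun X Y => g X Y) (fun X Y => g X Y) X₁ X₂ X₃ X₄) X Y
      = LinearMap.trace ℝ V ℋ * g (ℋ X) Y - g (ℋ (ℋ X)) Y + ((n : ℝ) - 1) * c * g X Y := by
  have hℋℋ : ∑ j, g (ℋ X) (e j) * g (ℋ (e j)) Y = g (ℋ (ℋ X)) Y := by
    simp_rw [hsa _ Y, sum_mul_eq_of_orthonormal g e he]
  calc _ = g (ℋ X) Y * ∑ j, g (ℋ (e j)) (e j) - ∑ j, g (ℋ X) (e j) * g (ℋ (e j)) Y
        + c * (g X Y * ∑ j, g (e j) (e j) - ∑ j, g X (e j) * g (e j) Y) := by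
        simp only [ricci, KN, Finset.mul_sum, ← Finset.sum_sub_distrib, ← Finset.sum_add_distrib]
        refine Finset.sum_congr rfl fun j _ => ?_
        ring
    _ = _ := by
        simp only [← trace_eq_sum_of_orthonormal g e he, hℋℋ, sum_mul_eq_of_orthonormal g e he, he,
          ↓reduceIte, Finset.sum_const, Finset.card_univ, Fintype.card_fin, nsmul_eq_mul, mul_one]
        ring

theorem ricciOperator_eq_of_gauss (hpos : ∀ X : V, X ≠ 0 → 0 < g X X) (ℋ : V →ₗ[ℝ] V)
    (hsa : ∀ X Y, g (ℋ X) Y = g X (ℋ Y)) (c : ℝ) (𝒟 : V →ₗ[ℝ] V)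
    (h𝒟 : ∀ X Y, g (𝒟 X) Y = ricci (fun _ => (1 : ℝ)) e (fun X₁ X₂ X₃ X₄ =>
        (1 / 2 : ℝ) * KN (fun X Y => g (ℋ X) Y) (fun X Y => g (ℋ X) Y) X₁ X₂ X₃ X₄
          + (c / 2) * KN (fun X Y => g X Y) (fun X Y => g X Y) X₁ X₂ X₃ X₄) X Y) :
    𝒟 = LinearMap.trace ℝ V ℋ • ℋ - ℋ ^ 2 + (((n : ℝ) - 1) * c) • 1 :=
  ext_of_forall_apply_eq g hpos fun X Y => by
    simp only [h𝒟, ricci_gauss_eq g e he ℋ hsa, LinearMap.add_apply, LinearMap.sub_apply,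
      LinearMap.smul_apply, pow_two, Module.End.mul_apply, Module.End.one_apply,
      LinearMap.map_add₂, LinearMap.map_sub₂, LinearMap.map_smul₂, smul_eq_mul]

end OrthonormalBasis

omit [AddCommGroup V] [Module ℝ V] in
theorem KN_const_mul (a b : ℝ) (E F : V → V → ℝ) (X₁ X₂ X₃ X₄ : V) :
    KN (fun X Y => a * E X Y) (fun X Y => b * F X Y) X₁ X₂ X₃ X₄ = a * b * KN E F X₁ X₂ X₃ X₄ := by
  simp only [KN]
  ring

theorem quadratic_relation_of_cubic {A : Type*} [Ring A] [Algebra ℝ A] {x : A} {α β γ : ℝ}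
    (hx : aeval x (X ^ 3 - C α * X ^ 2 - C β * X - C γ) = 0) (t e : ℝ) :
    (t • x - x ^ 2 + e • 1) ^ 2 + ((α - t) ^ 2 + β - 2 * e) • (t • x - x ^ 2 + e • 1)
      + (e ^ 2 - (β + (α - t) ^ 2) * e - γ * (α - 2 * t)) • (1 : A)
      = (γ + (α - t) * (β + t * (α - t))) • x := by
  generalize hp : (α - t) ^ 2 + β - 2 * e = p
  generalize hq : e ^ 2 - (β + (α - t) ^ 2) * e - γ * (α - 2 * t) = q
  generalize hμ : γ + (α - t) * (β + t * (α - t)) = μ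
  have key : (C t * X - X ^ 2 + C e) ^ 2 + C p * (C t * X - X ^ 2 + C e) + C q
      = (X ^ 3 - C α * X ^ 2 - C β * X - C γ) * (X + C (α - 2 * t)) + C μ * X := by
    subst hp hq hμ
    simp only [map_add, map_sub, map_mul, map_pow, map_ofNat]
    ring
  have := congrArg (aeval x) key
  simp only [map_add, map_sub, map_mul, map_pow, aeval_X, aeval_C, Algebra.algebraMap_eq_smul_one,
    smul_mul_assoc, one_mul] at this hx
  rwa [hx, zero_mul, zero_add] at this

theorem statement13_general
    {V : Type*} [AddCommGroup V] [Module ℝ V]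
    (n : ℕ)
    (g : LinearMap.BilinForm ℝ V)
    (hsymm : ∀ X Y, g X Y = g Y X)
    (hpos : ∀ X : V, X ≠ 0 → 0 < g X X)
    [FiniteDimensional ℝ V]
    (e : Module.Basis (Fin n) ℝ V)
    (he : ∀ j k, g (e j) (e k) = if j = k then (1 : ℝ) else 0)
    (ℋ : V →ₗ[ℝ] V) (hsa : ∀ X Y, g (ℋ X) Y = g X (ℋ Y))
    (H : V → V → ℝ) (hH : H = fun X Y => g (ℋ X) Y)
    (l₀ l₁ l₂ : ℝ) (h01 : l₀ ≠ l₁) (h02 : l₀ ≠ l₂) (h12 : l₁ ≠ l₂)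
    (n₁ n₂ : ℕ)
    (heig : ∀ t : ℝ, Module.End.HasEigenvalue ℋ t ↔ t = l₀ ∨ t = l₁ ∨ t = l₂)
    (hm₀ : Module.finrank ℝ ↥(Module.End.eigenspace ℋ l₀) = 1)
    (hm₁ : Module.finrank ℝ ↥(Module.End.eigenspace ℋ l₁) = n₁)
    (hm₂ : Module.finrank ℝ ↥(Module.End.eigenspace ℋ l₂) = n₂)
    (c : ℝ)
    (R : V → V → V → V → ℝ)
    (hR : R = fun X₁ X₂ X₃ X₄ => (1 / 2 : ℝ) * KN H H X₁ X₂ X₃ X₄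
      + (c / 2) * KN (fun X Y => g X Y) (fun X Y => g X Y) X₁ X₂ X₃ X₄)
    (S : V → V → ℝ) (hSdef : S = ricci (fun _ => (1 : ℝ)) (⇑e) R)
    (𝒟 : V →ₗ[ℝ] V) (h𝒟 : ∀ X Y, g (𝒟 X) Y = S X Y)
    (α β γ : ℝ)
    (hα : α = l₀ + l₁ + l₂)
    (hβ : β = -(l₀ * (l₁ + l₂)) - l₁ * l₂)
    (hγ : γ = l₀ * l₁ * l₂)
    (A : V → V → ℝ)
    (hA : A = fun X Y => S (𝒟 X) Y
      + ((α - LinearMap.trace ℝ V ℋ) ^ 2 + β - 2 * ((n : ℝ) - 1) * c) * S X Y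
      + (((n : ℝ) - 1) ^ 2 * c ^ 2
          - (β + (α - LinearMap.trace ℝ V ℋ) ^ 2) * ((n : ℝ) - 1) * c
          - γ * (α - 2 * LinearMap.trace ℝ V ℋ)) * g X Y)
    (μ : ℝ)
    (hμ : μ = γ + (α - LinearMap.trace ℝ V ℋ)
      * (β + LinearMap.trace ℝ V ℋ * (α - LinearMap.trace ℝ V ℋ))) :
    (∀ X Y, A X Y = μ * H X Y) ∧
    (μ = (l₀ + ((n₁ : ℝ) - 1) * l₁ + ((n₂ : ℝ) - 1) * l₂)
      * (l₁ * l₂ + ((n₁ : ℝ) * l₁ + (n₂ : ℝ) * l₂)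
          * (((n₁ : ℝ) - 1) * l₁ + ((n₂ : ℝ) - 1) * l₂))) ∧
    (μ = 0 → ∃ ρ₁ ρ₂ : ℝ, ∀ X Y, S (𝒟 X) Y = ρ₁ * S X Y + ρ₂ * g X Y) ∧
    (μ ≠ 0 → ∀ X₁ X₂ X₃ X₄,
      R X₁ X₂ X₃ X₄ = (1 / (2 * μ ^ 2)) * KN A A X₁ X₂ X₃ X₄
        + (c / 2) * KN (fun X Y => g X Y) (fun X Y => g X Y) X₁ X₂ X₃ X₄) := by
  have h𝒟_eq : 𝒟 = LinearMap.trace ℝ V ℋ • ℋ - ℋ ^ 2 + (((n : ℝ) - 1) * c) • 1 := by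
    subst hH hR hSdef
    exact ricciOperator_eq_of_gauss g e he hpos ℋ hsa c 𝒟 h𝒟
  have htop := iSup_eigenspace_eq_top_of_isSymmetric g hpos hsymm ℋ hsa
  have hcubic : aeval ℋ (X ^ 3 - C α * X ^ 2 - C β * X - C γ) = 0 :=
    aeval_eq_zero_of_iSup_eigenspace_eq_top htop fun x hx => by
      rcases (heig x).1 hx with rfl | rfl | rfl <;>
        simp only [IsRoot.def, eval_sub, eval_mul, eval_pow, eval_X, eval_C, hα, hβ, hγ] <;> ring
  have ht : LinearMap.trace ℝ V ℋ = l₀ + n₁ * l₁ + n₂ * l₂ := by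
    rw [trace_eq_sum_mul_finrank_eigenspace htop {l₀, l₁, l₂} (by simpa using heig),
      Finset.sum_insert (by simp [h01, h02]), Finset.sum_insert (by simp [h12]),
      Finset.sum_singleton, hm₀, hm₁, hm₂]
    push_cast
    ring
  have hAμ : ∀ X Y, A X Y = μ * H X Y := by
    have hop := quadratic_relation_of_cubic hcubic (LinearMap.trace ℝ V ℋ) (((n : ℝ) - 1) * c)
    rw [← h𝒟_eq, ← hμ] at hop
    intro X Y
    have := congrArg (fun L : Module.End ℝ V => g (L X) Y) hop
    simp only [LinearMap.add_apply, LinearMap.smul_apply, Module.End.one_apply, pow_two,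
      Module.End.mul_apply, LinearMap.map_add₂, LinearMap.map_smul₂, smul_eq_mul, h𝒟] at this
    simp only [hA, hH]
    linear_combination this
  refine ⟨hAμ, by rw [hμ, ht, hα, hβ, hγ]; ring, fun hμ0 => ?_, fun hμ0 X₁ X₂ X₃ X₄ => ?_⟩
  · obtain ⟨p, q, hpq⟩ : ∃ p q : ℝ, ∀ X Y, A X Y = S (𝒟 X) Y + p * S X Y + q * g X Y :=
      ⟨_, _, fun X Y => congrFun (congrFun hA X) Y⟩
    exact ⟨-p, -q, fun X Y => by linear_combination hAμ X Y - hpq X Y + H X Y * hμ0⟩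
  · rw [hR, show A = fun X Y => μ * H X Y from funext₂ hAμ, KN_const_mul]
    field_simp

/-- hypersurface of a Riemannian space form N^{n+1}(c) with three distinct
principal curvatures λ₀, λ₁, λ₂ of multiplicities 1, n₁, n₂ (Gauss equation pointwise). -/
theorem statement13
    {V : Type*} [AddCommGroup V] [Module ℝ V]
    (n : ℕ) (hn : 3 ≤ n)
    (g : LinearMap.BilinForm ℝ V)
    (hsymm : ∀ X Y, g X Y = g Y X)
    (hpos : ∀ X : V, X ≠ 0 → 0 < g X X)
    [FiniteDimensional ℝ V] (hdim : Module.finrank ℝ V = n)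
    (e : Module.Basis (Fin n) ℝ V)
    (he : ∀ j k, g (e j) (e k) = if j = k then (1 : ℝ) else 0)
    (ℋ : V →ₗ[ℝ] V) (hsa : ∀ X Y, g (ℋ X) Y = g X (ℋ Y))
    (H : V → V → ℝ) (hH : H = fun X Y => g (ℋ X) Y)
    (l₀ l₁ l₂ : ℝ) (h01 : l₀ ≠ l₁) (h02 : l₀ ≠ l₂) (h12 : l₁ ≠ l₂)
    (n₁ n₂ : ℕ) (hsum : 1 + n₁ + n₂ = n)
    (heig : ∀ t : ℝ, Module.End.HasEigenvalue ℋ t ↔ t = l₀ ∨ t = l₁ ∨ t = l₂)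
    (hm₀ : Module.finrank ℝ ↥(Module.End.eigenspace ℋ l₀) = 1)
    (hm₁ : Module.finrank ℝ ↥(Module.End.eigenspace ℋ l₁) = n₁)
    (hm₂ : Module.finrank ℝ ↥(Module.End.eigenspace ℋ l₂) = n₂)
    (c : ℝ)
    (R : V → V → V → V → ℝ)
    (hR : R = fun X₁ X₂ X₃ X₄ => (1 / 2 : ℝ) * KN H H X₁ X₂ X₃ X₄
      + (c / 2) * KN (fun X Y => g X Y) (fun X Y => g X Y) X₁ X₂ X₃ X₄)
    (S : V → V → ℝ) (hSdef : S = ricci (fun _ => (1 : ℝ)) (⇑e) R)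
    (𝒟 : V →ₗ[ℝ] V) (h𝒟 : ∀ X Y, g (𝒟 X) Y = S X Y)
    (α β γ : ℝ)
    (hα : α = l₀ + l₁ + l₂)
    (hβ : β = -(l₀ * (l₁ + l₂)) - l₁ * l₂)
    (hγ : γ = l₀ * l₁ * l₂)
    (A : V → V → ℝ)
    (hA : A = fun X Y => S (𝒟 X) Y
      + ((α - LinearMap.trace ℝ V ℋ) ^ 2 + β - 2 * ((n : ℝ) - 1) * c) * S X Y
      + (((n : ℝ) - 1) ^ 2 * c ^ 2
          - (β + (α - LinearMap.trace ℝ V ℋ) ^ 2) * ((n : ℝ) - 1) * c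
          - γ * (α - 2 * LinearMap.trace ℝ V ℋ)) * g X Y)
    (μ : ℝ)
    (hμ : μ = γ + (α - LinearMap.trace ℝ V ℋ)
      * (β + LinearMap.trace ℝ V ℋ * (α - LinearMap.trace ℝ V ℋ))) :
    (∀ X Y, A X Y = μ * H X Y) ∧
    (μ = (l₀ + ((n₁ : ℝ) - 1) * l₁ + ((n₂ : ℝ) - 1) * l₂)
      * (l₁ * l₂ + ((n₁ : ℝ) * l₁ + (n₂ : ℝ) * l₂)
          * (((n₁ : ℝ) - 1) * l₁ + ((n₂ : ℝ) - 1) * l₂))) ∧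
    (μ = 0 → ∃ ρ₁ ρ₂ : ℝ, ∀ X Y, S (𝒟 X) Y = ρ₁ * S X Y + ρ₂ * g X Y) ∧
    (μ ≠ 0 → ∀ X₁ X₂ X₃ X₄,
      R X₁ X₂ X₃ X₄ = (1 / (2 * μ ^ 2)) * KN A A X₁ X₂ X₃ X₄
        + (c / 2) * KN (fun X Y => g X Y) (fun X Y => g X Y) X₁ X₂ X₃ X₄) :=
  statement13_general n g hsymm hpos e he ℋ hsa H hH l₀ l₁ l₂ h01 h02 h12 n₁ n₂ heig hm₀ hm₁ hm₂ c R
    hR S hSdef 𝒟 h𝒟 α β γ hα hβ hγ A hA μ hμ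

end OVAff
end

section
/- Let n ≥ 4, let V be an n-dimensional real vector space with a nondegenerate symmetric bilinear form g, and let B be a generalized curvature tensor on V satisfying B = (φ/2)·Ric(B)∧Ric(B) + μ·g∧Ric(B) + (η/2)·g∧g with φ ≠ 0, Ric(B) ≠ (κ(B)/n)·g and Weyl(B) ≠ 0. Define L_B = φ⁻¹((n−2)(μ² − φη) − μ), L = L_B + φ⁻¹μ, α₁ = κ(B) + φ⁻¹((n−2)μ − 1), and L_{Weyl(B)} = L_B + (1/(n−2))(κ(B)/(n−1) − α₁). Then L + L_{Weyl(B)} − 1/((n−2)φ) = 2L_B − κ(B)/(n−1), and Weyl(B)·B + B·Weyl(B) = Q(Ric(B), Weyl(B)) + (L + L_{Weyl(B)} − 1/((n−2)φ))·Q(g, Weyl(B)). -/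
/-!
Contracting the Roter equation shows that the Ricci operator `𝒮` satisfies
`𝒮² = α₁ 𝒮 + φ⁻¹ (μ κ + (n - 1) η) Id`, and `Weyl(B)` is again of Roter type, with the same `φ`.
For a Roter-type tensor `T` built from such a Ricci tensor, the derivation `T·` kills `g` and
sends `Ric` to a multiple of `Q(g, Ric)`, while `Q(Ric, Ric) = Q(g, g) = 0` and
`Q(Ric, g) = -Q(g, Ric)`. By the Leibniz rule for Kulkarni–Nomizu products, both sides of the
identity are then combinations of `Ric ∧ Q(g, Ric)` and `g ∧ Q(g, Ric)`, and it reduces to two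
scalar identities.
-/

namespace OVAff

variable {V : Type*}

noncomputable def roterTensor (φ μ η : ℝ) (g S : V → V → ℝ) : V → V → V → V → ℝ :=
  fun X₁ X₂ X₃ X₄ => (φ / 2) * KN S S X₁ X₂ X₃ X₄ + μ * KN g S X₁ X₂ X₃ X₄
    + (η / 2) * KN g g X₁ X₂ X₃ X₄

theorem ricci_comm {n : ℕ} (ε : Fin n → ℝ) (e : Fin n → V) {B : V → V → V → V → ℝ}
    (hB1 : ∀ X₁ X₂ X₃ X₄, B X₁ X₂ X₃ X₄ = - B X₂ X₁ X₃ X₄)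
    (hB2 : ∀ X₁ X₂ X₃ X₄, B X₁ X₂ X₃ X₄ = B X₃ X₄ X₁ X₂) (a b : V) :
    ricci ε e B a b = ricci ε e B b a := by
  refine Finset.sum_congr rfl fun j _ => ?_
  rw [hB2 (e j) a b, hB1 b, hB2 (e j) b a, hB1 a, hB2 (e j) b (e j) a]

theorem roterTensor_antisymm_right {g S : V → V → ℝ} (hg : ∀ x y, g x y = g y x)
    (hS : ∀ x y, S x y = S y x) (φ μ η : ℝ) (X₁ X₂ X₃ X₄ : V) :
    roterTensor φ μ η g S X₁ X₂ X₃ X₄ = - roterTensor φ μ η g S X₁ X₂ X₄ X₃ := by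
  simp only [roterTensor, KN]
  rw [hg X₁ X₃, hg X₁ X₄, hg X₂ X₃, hg X₂ X₄, hS X₁ X₃, hS X₁ X₄, hS X₂ X₃, hS X₂ X₄]
  ring

theorem weyl_roterTensor {n : ℕ} (ε : Fin n → ℝ) (e : Fin n → V) {g S : V → V → ℝ}
    (φ μ η : ℝ) (hS : ricci ε e (roterTensor φ μ η g S) = S) :
    weyl g ε e (roterTensor φ μ η g S)
      = roterTensor φ (μ - 1 / ((n : ℝ) - 2))
          (η + scal ε e (roterTensor φ μ η g S) / (((n : ℝ) - 2) * ((n : ℝ) - 1))) g S := by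
  funext X₁ X₂ X₃ X₄
  simp only [weyl, hS, roterTensor, div_eq_mul_inv, mul_inv]
  ring

theorem dot4_KN (D : V → V → V → V) (E F : V → V → ℝ) (X₁ X₂ X₃ X₄ X Y : V) :
    dot4 D (KN E F) X₁ X₂ X₃ X₄ X Y
      = KN4 E (dot2 D F) X₁ X₂ X₃ X₄ X Y + KN4 F (dot2 D E) X₁ X₂ X₃ X₄ X Y := by
  simp only [dot4, KN, KN4, dot2]
  ring

theorem dot4_roterTensor {D : V → V → V → V} {g S : V → V → ℝ} {P : V → V → V → V → ℝ}
    {c d : ℝ} (hDS : ∀ x₁ x₂ X Y, dot2 D S x₁ x₂ X Y = c * P x₁ x₂ X Y)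
    (hDg : ∀ x₁ x₂ X Y, dot2 D g x₁ x₂ X Y = d * P x₁ x₂ X Y) (φ μ η : ℝ)
    (X₁ X₂ X₃ X₄ X Y : V) :
    dot4 D (roterTensor φ μ η g S) X₁ X₂ X₃ X₄ X Y
      = (φ * c + μ * d) * KN4 S P X₁ X₂ X₃ X₄ X Y
        + (μ * c + η * d) * KN4 g P X₁ X₂ X₃ X₄ X Y := by
  have hsplit : dot4 D (roterTensor φ μ η g S) X₁ X₂ X₃ X₄ X Y
      = (φ / 2) * dot4 D (KN S S) X₁ X₂ X₃ X₄ X Y + μ * dot4 D (KN g S) X₁ X₂ X₃ X₄ X Y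
        + (η / 2) * dot4 D (KN g g) X₁ X₂ X₃ X₄ X Y := by
    simp only [dot4, roterTensor]
    ring
  rw [hsplit, dot4_KN, dot4_KN, dot4_KN]
  simp only [KN4, hDS, hDg]
  ring

theorem Q4_eq_dot4 [AddCommGroup V] [Module ℝ V] (A : V → V → ℝ) (T : V → V → V → V → ℝ) :
    Q4 A T = dot4 (wedgeVec A) T := rfl

theorem Q2_eq_dot2 [AddCommGroup V] [Module ℝ V] (A T : V → V → ℝ) :
    Q2 A T = dot2 (wedgeVec A) T := rfl

theorem dot2_eq_zero_of_antisymm {D : V → V → V → V} {g : V → V → ℝ} {T : V → V → V → V → ℝ}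
    (hg : ∀ x y, g x y = g y x) (hD : ∀ X Y Z W, g (D X Y Z) W = T X Y Z W)
    (hT : ∀ X Y Z W, T X Y Z W = - T X Y W Z) (x₁ x₂ X Y : V) :
    dot2 D g x₁ x₂ X Y = 0 := by
  rw [dot2, hg x₁, hD, hD, hT X Y x₂]
  ring

section Bilinear

variable [AddCommGroup V] [Module ℝ V]

theorem Q2_comm {A E : LinearMap.BilinForm ℝ V} (hA : ∀ x y, A x y = A y x)
    (hE : ∀ x y, E x y = E y x) (x₁ x₂ X Y : V) :
    Q2 (fun X Y => A X Y) (fun X Y => E X Y) x₁ x₂ X Y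
      = - Q2 (fun X Y => E X Y) (fun X Y => A X Y) x₁ x₂ X Y := by
  simp only [Q2, wedgeVec, map_sub, map_smul, LinearMap.sub_apply, LinearMap.smul_apply,
    smul_eq_mul]
  rw [hA x₁ X, hA x₁ Y, hE x₁ X, hE x₁ Y]
  ring

theorem Q2_self {A : LinearMap.BilinForm ℝ V} (hA : ∀ x y, A x y = A y x) (x₁ x₂ X Y : V) :
    Q2 (fun X Y => A X Y) (fun X Y => A X Y) x₁ x₂ X Y = 0 := by
  linarith [Q2_comm hA hA x₁ x₂ X Y]

theorem dot2_roterTensor {g S : LinearMap.BilinForm ℝ V} (hS : ∀ x y, S x y = S y x)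
    {𝒮 : V → V} (h𝒮 : ∀ a b, S a b = g a (𝒮 b)) {A₁ A₂ : ℝ}
    (h𝒮sq : ∀ a b, S a (𝒮 b) = A₁ * S a b + A₂ * g a b) {φ μ η : ℝ} {D : V → V → V → V}
    (hD : ∀ X Y Z W, g (D X Y Z) W
      = roterTensor φ μ η (fun X Y => g X Y) (fun X Y => S X Y) X Y Z W)
    (x₁ x₂ X Y : V) :
    dot2 D (fun X Y => S X Y) x₁ x₂ X Y
      = (μ * A₁ + η - φ * A₂) * Q2 (fun X Y => g X Y) (fun X Y => S X Y) x₁ x₂ X Y := by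
  rw [dot2, hS x₁, h𝒮, h𝒮, hD, hD]
  simp only [roterTensor, KN, h𝒮sq, ← h𝒮, Q2, wedgeVec, map_sub, map_smul,
    LinearMap.sub_apply, LinearMap.smul_apply, smul_eq_mul]
  rw [hS x₁ X, hS x₁ Y]
  ring

/-- `hcS` and `hcg` compare the coefficients of `S ∧ Q(g, S)` and `g ∧ Q(g, S)`, which span
both sides. -/
theorem dot4_add_dot4_roterTensor {g S : LinearMap.BilinForm ℝ V} (hg : ∀ x y, g x y = g y x)
    (hS : ∀ x y, S x y = S y x) {𝒮 : V → V} (h𝒮 : ∀ a b, S a b = g a (𝒮 b)) {A₁ A₂ : ℝ}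
    (h𝒮sq : ∀ a b, S a (𝒮 b) = A₁ * S a b + A₂ * g a b) {φ μ η μ' η' c : ℝ}
    {ℬ 𝒲 : V → V → V → V}
    (hℬ : ∀ X Y Z W, g (ℬ X Y Z) W
      = roterTensor φ μ η (fun X Y => g X Y) (fun X Y => S X Y) X Y Z W)
    (h𝒲 : ∀ X Y Z W, g (𝒲 X Y Z) W
      = roterTensor φ μ' η' (fun X Y => g X Y) (fun X Y => S X Y) X Y Z W)
    (hcS : φ * ((μ' * A₁ + η' - φ * A₂) + (μ * A₁ + η - φ * A₂)) + μ' = c * φ)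
    (hcg : μ * (μ' * A₁ + η' - φ * A₂) + μ' * (μ * A₁ + η - φ * A₂) + η' = c * μ')
    (X₁ X₂ X₃ X₄ X Y : V) :
    dot4 𝒲 (roterTensor φ μ η (fun X Y => g X Y) (fun X Y => S X Y)) X₁ X₂ X₃ X₄ X Y
        + dot4 ℬ (roterTensor φ μ' η' (fun X Y => g X Y) (fun X Y => S X Y)) X₁ X₂ X₃ X₄ X Y
      = Q4 (fun X Y => S X Y) (roterTensor φ μ' η' (fun X Y => g X Y) (fun X Y => S X Y))
          X₁ X₂ X₃ X₄ X Y
        + c * Q4 (fun X Y => g X Y) (roterTensor φ μ' η' (fun X Y => g X Y) (fun X Y => S X Y))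
          X₁ X₂ X₃ X₄ X Y := by
  have hgskew := roterTensor_antisymm_right (g := fun X Y => g X Y) hg hS
  have hSS (x₁ x₂ X Y : V) :
      dot2 (wedgeVec fun X Y => S X Y) (fun X Y => S X Y) x₁ x₂ X Y
        = 0 * Q2 (fun X Y => g X Y) (fun X Y => S X Y) x₁ x₂ X Y := by
    rw [← Q2_eq_dot2, Q2_self hS, zero_mul]
  have hSg (x₁ x₂ X Y : V) :
      dot2 (wedgeVec fun X Y => S X Y) (fun X Y => g X Y) x₁ x₂ X Y
        = -1 * Q2 (fun X Y => g X Y) (fun X Y => S X Y) x₁ x₂ X Y := by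
    rw [← Q2_eq_dot2, Q2_comm hS hg, neg_one_mul]
  have hgS (x₁ x₂ X Y : V) :
      dot2 (wedgeVec fun X Y => g X Y) (fun X Y => S X Y) x₁ x₂ X Y
        = 1 * Q2 (fun X Y => g X Y) (fun X Y => S X Y) x₁ x₂ X Y := by
    rw [← Q2_eq_dot2, one_mul]
  have hgg (x₁ x₂ X Y : V) :
      dot2 (wedgeVec fun X Y => g X Y) (fun X Y => g X Y) x₁ x₂ X Y
        = 0 * Q2 (fun X Y => g X Y) (fun X Y => S X Y) x₁ x₂ X Y := by
    rw [← Q2_eq_dot2, Q2_self hg, zero_mul]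
  have hℬg (x₁ x₂ X Y : V) :
      dot2 ℬ (fun X Y => g X Y) x₁ x₂ X Y
        = 0 * Q2 (fun X Y => g X Y) (fun X Y => S X Y) x₁ x₂ X Y := by
    rw [dot2_eq_zero_of_antisymm hg hℬ (hgskew φ μ η), zero_mul]
  have h𝒲g (x₁ x₂ X Y : V) :
      dot2 𝒲 (fun X Y => g X Y) x₁ x₂ X Y
        = 0 * Q2 (fun X Y => g X Y) (fun X Y => S X Y) x₁ x₂ X Y := by
    rw [dot2_eq_zero_of_antisymm hg h𝒲 (hgskew φ μ' η'), zero_mul]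
  rw [Q4_eq_dot4, Q4_eq_dot4, dot4_roterTensor (dot2_roterTensor hS h𝒮 h𝒮sq h𝒲) h𝒲g,
    dot4_roterTensor (dot2_roterTensor hS h𝒮 h𝒮sq hℬ) hℬg, dot4_roterTensor hSS hSg,
    dot4_roterTensor hgS hgg]
  linear_combination
    hcS * KN4 (fun X Y => S X Y) (Q2 (fun X Y => g X Y) (fun X Y => S X Y)) X₁ X₂ X₃ X₄ X Y
      + hcg * KN4 (fun X Y => g X Y) (Q2 (fun X Y => g X Y) (fun X Y => S X Y)) X₁ X₂ X₃ X₄ X Y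

end Bilinear

section OrthonormalBasis

variable [AddCommGroup V] [Module ℝ V] {n : ℕ}

noncomputable def raiseIndex (ε : Fin n → ℝ) (e : Fin n → V) (S : V → V → ℝ) (b : V) : V :=
  ∑ j, (ε j * S b (e j)) • e j

noncomputable def ricciForm (ε : Fin n → ℝ) (e : Fin n → V)
    (B : V →ₗ[ℝ] V →ₗ[ℝ] V →ₗ[ℝ] V →ₗ[ℝ] ℝ) : LinearMap.BilinForm ℝ V :=
  LinearMap.mk₂ ℝ (ricci ε e fun X₁ X₂ X₃ X₄ => B X₁ X₂ X₃ X₄)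
    (fun _ _ _ => by
      simp only [ricci, map_add, LinearMap.add_apply, mul_add, Finset.sum_add_distrib])
    (fun _ _ _ => by
      simp only [ricci, map_smul, LinearMap.smul_apply, smul_eq_mul, Finset.mul_sum]
      exact Finset.sum_congr rfl fun _ _ => by ring)
    (fun _ _ _ => by
      simp only [ricci, map_add, LinearMap.add_apply, mul_add, Finset.sum_add_distrib])
    (fun _ _ _ => by
      simp only [ricci, map_smul, LinearMap.smul_apply, smul_eq_mul, Finset.mul_sum]
      exact Finset.sum_congr rfl fun _ _ => by ring)

variable {g : LinearMap.BilinForm ℝ V} {e : Module.Basis (Fin n) ℝ V} {ε : Fin n → ℝ}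

theorem sum_metric_smul_eq (hε : ∀ j, ε j = 1 ∨ ε j = -1)
    (he : ∀ j k, g (e j) (e k) = if j = k then ε j else 0) (v : V) :
    ∑ j, (ε j * g (e j) v) • e j = v := by
  have hcoord : ∀ j, g (e j) v = ε j * e.repr v j := by
    intro j
    conv_lhs => rw [← e.sum_repr v]
    simp only [map_sum, map_smul, smul_eq_mul, he, mul_ite, mul_zero, Finset.sum_ite_eq,
      Finset.mem_univ, if_true]
    ring
  conv_rhs => rw [← e.sum_repr v]
  refine Finset.sum_congr rfl fun j _ => ?_
  rcases hε j with h | h <;> simp [hcoord, h]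

theorem sum_metric_mul_apply (hε : ∀ j, ε j = 1 ∨ ε j = -1)
    (he : ∀ j k, g (e j) (e k) = if j = k then ε j else 0) (f : V →ₗ[ℝ] ℝ) (v : V) :
    ∑ j, ε j * g (e j) v * f (e j) = f v := by
  conv_rhs => rw [← sum_metric_smul_eq hε he v]
  simp only [map_sum, map_smul, smul_eq_mul]

theorem sum_metric_self (hε : ∀ j, ε j = 1 ∨ ε j = -1)
    (he : ∀ j k, g (e j) (e k) = if j = k then ε j else 0) :
    ∑ j, ε j * g (e j) (e j) = n := by
  have hsq : ∀ j, ε j * g (e j) (e j) = 1 := fun j => by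
    rcases hε j with h | h <;> simp [he, h]
  simp [hsq]

theorem metric_raiseIndex (hg : ∀ x y, g x y = g y x) (hε : ∀ j, ε j = 1 ∨ ε j = -1)
    (he : ∀ j k, g (e j) (e k) = if j = k then ε j else 0) {S : LinearMap.BilinForm ℝ V}
    (hS : ∀ x y, S x y = S y x) (a b : V) :
    g a (raiseIndex ε e (fun X Y => S X Y) b) = S a b := by
  rw [hS, ← sum_metric_mul_apply hε he (S b) a]
  simp only [raiseIndex, map_sum, map_smul, smul_eq_mul]
  exact Finset.sum_congr rfl fun j _ => by rw [hg a]; ring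

theorem ricci_roterTensor (hg : ∀ x y, g x y = g y x) (hε : ∀ j, ε j = 1 ∨ ε j = -1)
    (he : ∀ j k, g (e j) (e k) = if j = k then ε j else 0) {S : LinearMap.BilinForm ℝ V}
    (hS : ∀ x y, S x y = S y x) (φ μ η : ℝ) (a b : V) :
    ricci ε e (roterTensor φ μ η (fun X Y => g X Y) (fun X Y => S X Y)) a b
      = φ * ((∑ j, ε j * S (e j) (e j)) * S a b - S a (raiseIndex ε e (fun X Y => S X Y) b))
        + μ * (((n : ℝ) - 2) * S a b + (∑ j, ε j * S (e j) (e j)) * g a b)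
        + η * ((n : ℝ) - 1) * g a b := by
  have hSS : S a (raiseIndex ε e (fun X Y => S X Y) b) = ∑ j, ε j * S b (e j) * S a (e j) := by
    simp only [raiseIndex, map_sum, map_smul, smul_eq_mul]
  calc ricci ε e (roterTensor φ μ η (fun X Y => g X Y) (fun X Y => S X Y)) a b
      = φ * (S a b * ∑ j, ε j * S (e j) (e j) - ∑ j, ε j * S b (e j) * S a (e j))
        + μ * (S a b * ∑ j, ε j * g (e j) (e j) + g a b * ∑ j, ε j * S (e j) (e j)
          - ∑ j, ε j * g (e j) b * S a (e j) - ∑ j, ε j * g (e j) a * S b (e j))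
        + η * (g a b * ∑ j, ε j * g (e j) (e j) - ∑ j, ε j * g (e j) b * g a (e j)) := by
        simp only [ricci, mul_sub, mul_add, Finset.mul_sum, ← Finset.sum_sub_distrib,
          ← Finset.sum_add_distrib]
        refine Finset.sum_congr rfl fun j _ => ?_
        simp only [roterTensor, KN]
        rw [hS (e j) b, hS a (e j), hg (e j) a]
        ring
    _ = _ := by
        rw [sum_metric_mul_apply hε he, sum_metric_mul_apply hε he, sum_metric_mul_apply hε he,
          sum_metric_self hε he, hSS, hS b a]
        ring

theorem apply_raiseIndex_of_ricci_roterTensor (hg : ∀ x y, g x y = g y x)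
    (hε : ∀ j, ε j = 1 ∨ ε j = -1) (he : ∀ j k, g (e j) (e k) = if j = k then ε j else 0)
    {S : LinearMap.BilinForm ℝ V} (hS : ∀ x y, S x y = S y x) {φ μ η : ℝ} (hφ : φ ≠ 0)
    (hRic : ricci ε e (roterTensor φ μ η (fun X Y => g X Y) (fun X Y => S X Y))
      = fun X Y => S X Y) (a b : V) :
    S a (raiseIndex ε e (fun X Y => S X Y) b)
      = ((∑ j, ε j * S (e j) (e j)) + φ⁻¹ * (((n : ℝ) - 2) * μ - 1)) * S a b
        + φ⁻¹ * (μ * (∑ j, ε j * S (e j) (e j)) + ((n : ℝ) - 1) * η) * g a b := by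
  have h := ricci_roterTensor hg hε he hS φ μ η a b
  rw [hRic] at h
  linear_combination φ⁻¹ * h
    + ((∑ j, ε j * S (e j) (e j)) * S a b - S a (raiseIndex ε e (fun X Y => S X Y) b))
      * mul_inv_cancel₀ hφ

end OrthonormalBasis

theorem statement15_general
    {V : Type*} [AddCommGroup V] [Module ℝ V]
    (n : ℕ) (hn : 4 ≤ n)
    (g : LinearMap.BilinForm ℝ V)
    (hgsymm : ∀ X Y, g X Y = g Y X)
    (e : Module.Basis (Fin n) ℝ V) (ε : Fin n → ℝ)
    (hε : ∀ j, ε j = 1 ∨ ε j = -1)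
    (he : ∀ j k, g (e j) (e k) = if j = k then ε j else 0)
    (B : V →ₗ[ℝ] V →ₗ[ℝ] V →ₗ[ℝ] V →ₗ[ℝ] ℝ)
    (Bf : V → V → V → V → ℝ) (hBf : Bf = fun X₁ X₂ X₃ X₄ => B X₁ X₂ X₃ X₄)
    (hB1 : ∀ X₁ X₂ X₃ X₄, Bf X₁ X₂ X₃ X₄ = - Bf X₂ X₁ X₃ X₄)
    (hB2 : ∀ X₁ X₂ X₃ X₄, Bf X₁ X₂ X₃ X₄ = Bf X₃ X₄ X₁ X₂)
    (Ric : V → V → ℝ) (hRic : Ric = ricci ε (⇑e) Bf)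
    (κ : ℝ) (hκ : κ = scal ε (⇑e) Bf)
    (Wl : V → V → V → V → ℝ) (hWl : Wl = weyl (fun X Y => g X Y) ε (⇑e) Bf)
    (φ μ η : ℝ) (hφ : φ ≠ 0)
    (hRoter : ∀ X₁ X₂ X₃ X₄, Bf X₁ X₂ X₃ X₄
      = (φ / 2) * KN Ric Ric X₁ X₂ X₃ X₄
        + μ * KN (fun X Y => g X Y) Ric X₁ X₂ X₃ X₄
        + (η / 2) * KN (fun X Y => g X Y) (fun X Y => g X Y) X₁ X₂ X₃ X₄)
    (ℬB : V → V → V → V) (hℬB : ∀ X Y Z W, g (ℬB X Y Z) W = Bf X Y Z W)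
    (ℬW : V → V → V → V) (hℬW : ∀ X Y Z W, g (ℬW X Y Z) W = Wl X Y Z W)
    (LB L α₁ LW : ℝ)
    (hLB : LB = φ⁻¹ * (((n : ℝ) - 2) * (μ ^ 2 - φ * η) - μ))
    (hL : L = LB + φ⁻¹ * μ)
    (hα₁ : α₁ = κ + φ⁻¹ * (((n : ℝ) - 2) * μ - 1))
    (hLW : LW = LB + (1 / ((n : ℝ) - 2)) * (κ / ((n : ℝ) - 1) - α₁)) :
    (L + LW - 1 / (((n : ℝ) - 2) * φ) = 2 * LB - κ / ((n : ℝ) - 1)) ∧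
    (∀ X₁ X₂ X₃ X₄ X Y,
      dot4 ℬW Bf X₁ X₂ X₃ X₄ X Y + dot4 ℬB Wl X₁ X₂ X₃ X₄ X Y
        = Q4 Ric Wl X₁ X₂ X₃ X₄ X Y
          + (L + LW - 1 / (((n : ℝ) - 2) * φ))
            * Q4 (fun X Y => g X Y) Wl X₁ X₂ X₃ X₄ X Y) := by
  have hn' : (4 : ℝ) ≤ n := by exact_mod_cast hn
  have hn2 : (n : ℝ) - 2 ≠ 0 := by linarith
  have hn1 : (n : ℝ) - 1 ≠ 0 := by linarith
  have hcoeff : L + LW - 1 / (((n : ℝ) - 2) * φ) = 2 * LB - κ / ((n : ℝ) - 1) := by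
    subst hLW hL hα₁
    field_simp
    ring
  refine ⟨hcoeff, ?_⟩
  set S := ricciForm ε e B
  have hRicS : Ric = fun X Y => S X Y := by rw [hRic, hBf]; rfl
  have hS : ∀ x y, S x y = S y x := by
    have h := ricci_comm ε e hB1 hB2
    rw [← hRic, hRicS] at h
    exact h
  subst hRicS
  have hBS : Bf = roterTensor φ μ η (fun X Y => g X Y) (fun X Y => S X Y) := by
    funext X₁ X₂ X₃ X₄; exact hRoter X₁ X₂ X₃ X₄
  subst hBS
  have hκS : κ = ∑ j, ε j * S (e j) (e j) := by
    simp only [hκ, scal, ← hRic]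
  have hWS := weyl_roterTensor ε e φ μ η hRic.symm
  rw [← hWl, ← hκ] at hWS
  subst hWS
  have h𝒮 (a b : V) := (metric_raiseIndex hgsymm hε he hS a b).symm
  have h𝒮sq := apply_raiseIndex_of_ricci_roterTensor hgsymm hε he hS hφ hRic.symm
  rw [← hκS, ← hα₁] at h𝒮sq
  intro X₁ X₂ X₃ X₄ X Y
  rw [hcoeff]
  refine dot4_add_dot4_roterTensor hgsymm hS h𝒮 h𝒮sq hℬB hℬW ?_ ?_ X₁ X₂ X₃ X₄ X Y
  · subst hLB hα₁
    field_simp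
    ring
  · subst hLB hα₁
    field_simp
    ring

/-- anticommutator identity for a Roter-type generalized curvature tensor. -/
theorem statement15
    {V : Type*} [AddCommGroup V] [Module ℝ V]
    (n : ℕ) (hn : 4 ≤ n)
    (g : LinearMap.BilinForm ℝ V)
    (hgsymm : ∀ X Y, g X Y = g Y X)
    (hgnd : ∀ X : V, (∀ Y, g X Y = 0) → X = 0)
    (e : Module.Basis (Fin n) ℝ V) (ε : Fin n → ℝ)
    (hε : ∀ j, ε j = 1 ∨ ε j = -1)
    (he : ∀ j k, g (e j) (e k) = if j = k then ε j else 0)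
    (B : V →ₗ[ℝ] V →ₗ[ℝ] V →ₗ[ℝ] V →ₗ[ℝ] ℝ)
    (Bf : V → V → V → V → ℝ) (hBf : Bf = fun X₁ X₂ X₃ X₄ => B X₁ X₂ X₃ X₄)
    (hB1 : ∀ X₁ X₂ X₃ X₄, Bf X₁ X₂ X₃ X₄ = - Bf X₂ X₁ X₃ X₄)
    (hB2 : ∀ X₁ X₂ X₃ X₄, Bf X₁ X₂ X₃ X₄ = Bf X₃ X₄ X₁ X₂)
    (hB3 : ∀ X₁ X₂ X₃ X₄, Bf X₁ X₂ X₃ X₄ + Bf X₂ X₃ X₁ X₄ + Bf X₃ X₁ X₂ X₄ = 0)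
    (Ric : V → V → ℝ) (hRic : Ric = ricci ε (⇑e) Bf)
    (κ : ℝ) (hκ : κ = scal ε (⇑e) Bf)
    (Wl : V → V → V → V → ℝ) (hWl : Wl = weyl (fun X Y => g X Y) ε (⇑e) Bf)
    (φ μ η : ℝ) (hφ : φ ≠ 0)
    (hRoter : ∀ X₁ X₂ X₃ X₄, Bf X₁ X₂ X₃ X₄
      = (φ / 2) * KN Ric Ric X₁ X₂ X₃ X₄
        + μ * KN (fun X Y => g X Y) Ric X₁ X₂ X₃ X₄
        + (η / 2) * KN (fun X Y => g X Y) (fun X Y => g X Y) X₁ X₂ X₃ X₄)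
    (hRicne : ¬ ∀ X Y, Ric X Y = (κ / (n : ℝ)) * g X Y)
    (hWlne : ¬ ∀ X₁ X₂ X₃ X₄, Wl X₁ X₂ X₃ X₄ = 0)
    (ℬB : V → V → V → V) (hℬB : ∀ X Y Z W, g (ℬB X Y Z) W = Bf X Y Z W)
    (ℬW : V → V → V → V) (hℬW : ∀ X Y Z W, g (ℬW X Y Z) W = Wl X Y Z W)
    (LB L α₁ LW : ℝ)
    (hLB : LB = φ⁻¹ * (((n : ℝ) - 2) * (μ ^ 2 - φ * η) - μ))
    (hL : L = LB + φ⁻¹ * μ)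
    (hα₁ : α₁ = κ + φ⁻¹ * (((n : ℝ) - 2) * μ - 1))
    (hLW : LW = LB + (1 / ((n : ℝ) - 2)) * (κ / ((n : ℝ) - 1) - α₁)) :
    (L + LW - 1 / (((n : ℝ) - 2) * φ) = 2 * LB - κ / ((n : ℝ) - 1)) ∧
    (∀ X₁ X₂ X₃ X₄ X Y,
      dot4 ℬW Bf X₁ X₂ X₃ X₄ X Y + dot4 ℬB Wl X₁ X₂ X₃ X₄ X Y
        = Q4 Ric Wl X₁ X₂ X₃ X₄ X Y
          + (L + LW - 1 / (((n : ℝ) - 2) * φ))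
            * Q4 (fun X Y => g X Y) Wl X₁ X₂ X₃ X₄ X Y) :=
  statement15_general n hn g hgsymm e ε hε he B Bf hBf hB1 hB2 Ric hRic κ hκ Wl hWl φ μ η hφ hRoter
    ℬB hℬB ℬW hℬW LB L α₁ LW hLB hL hα₁ hLW

end OVAff
end

section
/- Let n ≥ 4, let V be an n-dimensional real vector space with a nondegenerate symmetric bilinear form g, and let B be a generalized curvature tensor on V satisfying B = (φ/2)·Ric(B)∧Ric(B) + μ·g∧Ric(B) + (η/2)·g∧g with φ ≠ 0, Ric(B) ≠ (κ(B)/n)·g and Weyl(B) ≠ 0. With α₁ = κ(B) + φ⁻¹((n−2)μ − 1) and α₂ = φ⁻¹(μκ(B) + (n−1)η), the following hold: (a) α₂ = (1/n)·(tr_g((Ric(B))²) − α₁κ(B)); (b) (Ric(B))² − (1/n)·tr_g((Ric(B))²)·g = α₁·(Ric(B) − (κ(B)/n)·g); (c) (Ric(B))³ − (1/n)·tr_g((Ric(B))²)·Ric(B) = α₁·((Ric(B))² − (κ(B)/n)·Ric(B)). -/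
/-! Write `Ric = g(𝒟·,·)`; the symmetries of `B` make `𝒟` self-adjoint. In the Ricci
contraction of the Roter identity over an orthonormal basis, each Kulkarni–Nomizu product
contracts to traces and composites of the associated endomorphisms, which gives
`φ 𝒟² = (φκ + (n - 2)μ - 1) 𝒟 + (μκ + (n - 1)η) id`, i.e. `𝒟² = α₁ 𝒟 + α₂ id` since `g` is
nondegenerate. Its trace is (a); (b) and (c) are this identity and its composite with `𝒟`,
with `α₂` eliminated through (a). -/

namespace OVAff

variable {V : Type*} [AddCommGroup V] [Module ℝ V]

section Ricci

variable {W : Type*} {n : ℕ} (ε : Fin n → ℝ) (e : Fin n → W)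

theorem ricci_add (B C : W → W → W → W → ℝ) : ricci ε e (B + C) = ricci ε e B + ricci ε e C := by
  funext X Y
  simp only [ricci, Pi.add_apply, mul_add, Finset.sum_add_distrib]

theorem ricci_smul (c : ℝ) (B : W → W → W → W → ℝ) : ricci ε e (c • B) = c • ricci ε e B := by
  funext X Y
  simp only [ricci, Pi.smul_apply, smul_eq_mul, Finset.mul_sum, mul_left_comm]

theorem ricci_symm (B : W → W → W → W → ℝ)
    (hB1 : ∀ X₁ X₂ X₃ X₄, B X₁ X₂ X₃ X₄ = - B X₂ X₁ X₃ X₄)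
    (hB2 : ∀ X₁ X₂ X₃ X₄, B X₁ X₂ X₃ X₄ = B X₃ X₄ X₁ X₂) (X Y : W) :
    ricci ε e B X Y = ricci ε e B Y X := by
  have hswap : ∀ Z, B Z X Y Z = B Z Y X Z := fun Z => by
    rw [hB2 Z X Y Z, hB1 Y Z Z X, hB2 Z Y X Z, hB1 X Z Z Y, hB2 Z Y Z X]
  simp only [ricci, hswap]

end Ricci

theorem trace_id_eq_of_basis {n : ℕ} (e : Module.Basis (Fin n) ℝ V) :
    LinearMap.trace ℝ V LinearMap.id = n := by
  have := Module.Finite.of_basis e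
  rw [LinearMap.trace_id, Module.finrank_eq_card_basis e, Fintype.card_fin]

theorem ext_of_separatingLeft {g : LinearMap.BilinForm ℝ V} (hg : g.SeparatingLeft)
    {L M : V →ₗ[ℝ] V} (h : ∀ X Y, g (L X) Y = g (M X) Y) : L = M := by
  ext X
  rw [← sub_eq_zero]
  exact hg _ fun Y => by simp only [map_sub, LinearMap.sub_apply, h, sub_self]

section Orthonormal

variable {n : ℕ} {g : LinearMap.BilinForm ℝ V} {e : Module.Basis (Fin n) ℝ V} {ε : Fin n → ℝ}

theorem repr_eq_of_orthonormal_s16 (hε : ∀ j, ε j * ε j = 1)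
    (he : ∀ j k, g (e j) (e k) = if j = k then ε j else 0) (X : V) (j : Fin n) :
    e.repr X j = ε j * g X (e j) := by
  have hXj : g X (e j) = e.repr X j * ε j := by
    conv_lhs => rw [← e.sum_repr X]
    simp only [map_sum, LinearMap.sum_apply, map_smul, LinearMap.smul_apply, smul_eq_mul, he]
    simp
  rw [hXj, mul_left_comm, hε, mul_one]

theorem apply_eq_sum_of_orthonormal (hε : ∀ j, ε j * ε j = 1)
    (he : ∀ j k, g (e j) (e k) = if j = k then ε j else 0) (f : V →ₗ[ℝ] ℝ) (X : V) :
    f X = ∑ j, ε j * g X (e j) * f (e j) := by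
  conv_lhs => rw [← e.sum_repr X]
  simp only [map_sum, map_smul, smul_eq_mul, repr_eq_of_orthonormal_s16 hε he]

theorem trace_eq_sum_of_orthonormal_s16 (hε : ∀ j, ε j * ε j = 1)
    (he : ∀ j k, g (e j) (e k) = if j = k then ε j else 0) (L : V →ₗ[ℝ] V) :
    LinearMap.trace ℝ V L = ∑ j, ε j * g (L (e j)) (e j) := by
  rw [LinearMap.trace_eq_matrix_trace ℝ e L, Matrix.trace]
  simp only [Matrix.diag_apply, LinearMap.toMatrix_apply, repr_eq_of_orthonormal_s16 hε he]

theorem ricci_KN_of_orthonormal (hε : ∀ j, ε j * ε j = 1)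
    (he : ∀ j k, g (e j) (e k) = if j = k then ε j else 0) {E F : V → V → ℝ} {𝒜 𝒞 : V →ₗ[ℝ] V}
    (hE : ∀ X Y, E X Y = g (𝒜 X) Y) (hF : ∀ X Y, F X Y = g (𝒞 X) Y)
    (h𝒜 : ∀ X Y, g (𝒜 X) Y = g (𝒜 Y) X) (h𝒞 : ∀ X Y, g (𝒞 X) Y = g (𝒞 Y) X) (X Y : V) :
    ricci ε e (KN E F) X Y
      = LinearMap.trace ℝ V 𝒜 * F X Y + LinearMap.trace ℝ V 𝒞 * E X Y
        - g (𝒞 X) (𝒜 Y) - g (𝒞 Y) (𝒜 X) := by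
  have h𝒜Y : ∑ j, ε j * g (𝒜 (e j)) Y * g (𝒞 X) (e j) = g (𝒞 X) (𝒜 Y) := by
    simp only [h𝒜 _ Y]
    exact (apply_eq_sum_of_orthonormal hε he (g (𝒞 X)) (𝒜 Y)).symm
  have h𝒜X : ∑ j, ε j * g (𝒜 X) (e j) * g (𝒞 (e j)) Y = g (𝒞 Y) (𝒜 X) := by
    simp only [h𝒞 _ Y]
    exact (apply_eq_sum_of_orthonormal hε he (g (𝒞 Y)) (𝒜 X)).symm
  simp only [ricci, KN, hE, hF, trace_eq_sum_of_orthonormal_s16 hε he, ← h𝒜Y, ← h𝒜X, Finset.sum_mul,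
    ← Finset.sum_sub_distrib, ← Finset.sum_add_distrib]
  exact Finset.sum_congr rfl fun j _ => by ring

theorem ricci_roter_of_orthonormal (hε : ∀ j, ε j * ε j = 1)
    (he : ∀ j k, g (e j) (e k) = if j = k then ε j else 0) (hg : ∀ X Y, g X Y = g Y X)
    (𝒟 : V →ₗ[ℝ] V) (h𝒟 : ∀ X Y, g (𝒟 X) Y = g (𝒟 Y) X) (φ μ η : ℝ) (X Y : V) :
    ricci ε e ((φ / 2) • KN (fun X Y => g (𝒟 X) Y) (fun X Y => g (𝒟 X) Y)
        + μ • KN (fun X Y => g X Y) (fun X Y => g (𝒟 X) Y)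
        + (η / 2) • KN (fun X Y => g X Y) (fun X Y => g X Y)) X Y
      = φ * (LinearMap.trace ℝ V 𝒟 * g (𝒟 X) Y - g (𝒟 (𝒟 X)) Y)
        + μ * (((n : ℝ) - 2) * g (𝒟 X) Y + LinearMap.trace ℝ V 𝒟 * g X Y)
        + ((n : ℝ) - 1) * η * g X Y := by
  simp only [ricci_add, ricci_smul, Pi.add_apply, Pi.smul_apply, smul_eq_mul]
  have hI : ∀ X Y, g X Y = g ((LinearMap.id : V →ₗ[ℝ] V) X) Y := fun _ _ => rfl
  rw [ricci_KN_of_orthonormal hε he (fun _ _ => rfl) (fun _ _ => rfl) h𝒟 h𝒟,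
    ricci_KN_of_orthonormal hε he hI (fun _ _ => rfl) hg h𝒟,
    ricci_KN_of_orthonormal hε he hI hI hg hg, trace_id_eq_of_basis e]
  simp only [LinearMap.id_apply]
  rw [hg (𝒟 X) (𝒟 Y), h𝒟 Y (𝒟 X), h𝒟 Y X, hg Y X]
  ring

end Orthonormal

theorem ricci_identities_of_sq_eq {n : ℕ} (hn : (n : ℝ) ≠ 0) {g : LinearMap.BilinForm ℝ V}
    {Ric : V → V → ℝ} {𝒟 : V →ₗ[ℝ] V} (h𝒟 : ∀ X Y, g (𝒟 X) Y = Ric X Y) {α₁ α₂ κ : ℝ}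
    (hsq : 𝒟 ∘ₗ 𝒟 = α₁ • 𝒟 + α₂ • LinearMap.id)
    (htr : LinearMap.trace ℝ V (𝒟 ∘ₗ 𝒟) = α₁ * κ + α₂ * n) :
    (α₂ = (1 / (n : ℝ)) * (LinearMap.trace ℝ V (𝒟 ∘ₗ 𝒟) - α₁ * κ)) ∧
    (∀ X Y,
      Ric (𝒟 X) Y - (1 / (n : ℝ)) * LinearMap.trace ℝ V (𝒟 ∘ₗ 𝒟) * g X Y
        = α₁ * (Ric X Y - (κ / (n : ℝ)) * g X Y)) ∧
    (∀ X Y,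
      Ric (𝒟 (𝒟 X)) Y - (1 / (n : ℝ)) * LinearMap.trace ℝ V (𝒟 ∘ₗ 𝒟) * Ric X Y
        = α₁ * (Ric (𝒟 X) Y - (κ / (n : ℝ)) * Ric X Y)) := by
  have hRic𝒟 : ∀ X Y, Ric (𝒟 X) Y = α₁ * Ric X Y + α₂ * g X Y := fun X Y => by
    rw [← h𝒟, ← h𝒟, ← LinearMap.comp_apply 𝒟 𝒟 X, hsq]
    simp only [LinearMap.add_apply, LinearMap.smul_apply, LinearMap.id_apply, map_add, map_smul,
      smul_eq_mul]
  refine ⟨?_, fun X Y => ?_, fun X Y => ?_⟩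
  · rw [htr]; field_simp; ring
  · rw [hRic𝒟, htr]; field_simp; ring
  · rw [hRic𝒟 (𝒟 X), ← h𝒟 X Y, hRic𝒟, htr]; field_simp; ring

theorem statement16_general
    {V : Type*} [AddCommGroup V] [Module ℝ V]
    (n : ℕ) (hn : 4 ≤ n)
    (g : LinearMap.BilinForm ℝ V)
    (hgsymm : ∀ X Y, g X Y = g Y X)
    (hgnd : ∀ X : V, (∀ Y, g X Y = 0) → X = 0)
    (e : Module.Basis (Fin n) ℝ V) (ε : Fin n → ℝ)
    (hε : ∀ j, ε j = 1 ∨ ε j = -1)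
    (he : ∀ j k, g (e j) (e k) = if j = k then ε j else 0)
    (Bf : V → V → V → V → ℝ)
    (hB1 : ∀ X₁ X₂ X₃ X₄, Bf X₁ X₂ X₃ X₄ = - Bf X₂ X₁ X₃ X₄)
    (hB2 : ∀ X₁ X₂ X₃ X₄, Bf X₁ X₂ X₃ X₄ = Bf X₃ X₄ X₁ X₂)
    (Ric : V → V → ℝ) (hRic : Ric = ricci ε (⇑e) Bf)
    (κ : ℝ) (hκ : κ = scal ε (⇑e) Bf)
    (φ μ η : ℝ) (hφ : φ ≠ 0)
    (hRoter : ∀ X₁ X₂ X₃ X₄, Bf X₁ X₂ X₃ X₄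
      = (φ / 2) * KN Ric Ric X₁ X₂ X₃ X₄
        + μ * KN (fun X Y => g X Y) Ric X₁ X₂ X₃ X₄
        + (η / 2) * KN (fun X Y => g X Y) (fun X Y => g X Y) X₁ X₂ X₃ X₄)
    (𝒟 : V →ₗ[ℝ] V) (h𝒟 : ∀ X Y, g (𝒟 X) Y = Ric X Y)
    (α₁ α₂ : ℝ)
    (hα₁ : α₁ = κ + φ⁻¹ * (((n : ℝ) - 2) * μ - 1))
    (hα₂ : α₂ = φ⁻¹ * (μ * κ + ((n : ℝ) - 1) * η)) :
    (α₂ = (1 / (n : ℝ)) * (LinearMap.trace ℝ V (𝒟 ∘ₗ 𝒟) - α₁ * κ)) ∧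
    (∀ X Y,
      Ric (𝒟 X) Y - (1 / (n : ℝ)) * LinearMap.trace ℝ V (𝒟 ∘ₗ 𝒟) * g X Y
        = α₁ * (Ric X Y - (κ / (n : ℝ)) * g X Y)) ∧
    (∀ X Y,
      Ric (𝒟 (𝒟 X)) Y - (1 / (n : ℝ)) * LinearMap.trace ℝ V (𝒟 ∘ₗ 𝒟) * Ric X Y
        = α₁ * (Ric (𝒟 X) Y - (κ / (n : ℝ)) * Ric X Y)) := by
  have hε1 : ∀ j, ε j * ε j = 1 := fun j => by rcases hε j with h | h <;> simp [h]
  have h𝒟symm : ∀ X Y, g (𝒟 X) Y = g (𝒟 Y) X := by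
    simp only [h𝒟, hRic]
    exact ricci_symm ε e Bf hB1 hB2
  have hκ𝒟 : κ = LinearMap.trace ℝ V 𝒟 := by
    rw [trace_eq_sum_of_orthonormal_s16 hε1 he, hκ, scal, ← hRic]
    simp only [h𝒟]
  have hBf : Bf = (φ / 2) • KN (fun X Y => g (𝒟 X) Y) (fun X Y => g (𝒟 X) Y)
      + μ • KN (fun X Y => g X Y) (fun X Y => g (𝒟 X) Y)
      + (η / 2) • KN (fun X Y => g X Y) (fun X Y => g X Y) := by
    funext X₁ X₂ X₃ X₄
    simp only [hRoter, h𝒟, Pi.add_apply, Pi.smul_apply, smul_eq_mul]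
  have hsq : 𝒟 ∘ₗ 𝒟 = α₁ • 𝒟 + α₂ • LinearMap.id := by
    refine ext_of_separatingLeft hgnd fun X Y => ?_
    have hcontract := h𝒟 X Y
    rw [hRic, hBf, ricci_roter_of_orthonormal hε1 he hgsymm 𝒟 h𝒟symm, ← hκ𝒟] at hcontract
    simp only [LinearMap.comp_apply, LinearMap.add_apply, LinearMap.smul_apply,
      LinearMap.id_apply, map_add, map_smul, smul_eq_mul, hα₁, hα₂]
    field_simp
    linear_combination hcontract
  refine ricci_identities_of_sq_eq (Nat.cast_ne_zero.mpr (by omega)) h𝒟 hsq ?_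
  rw [hsq, map_add, map_smul, map_smul, trace_id_eq_of_basis e, ← hκ𝒟, smul_eq_mul, smul_eq_mul]

/-- Ricci polynomial identities for a Roter-type generalized curvature tensor. -/
theorem statement16
    {V : Type*} [AddCommGroup V] [Module ℝ V]
    (n : ℕ) (hn : 4 ≤ n)
    (g : LinearMap.BilinForm ℝ V)
    (hgsymm : ∀ X Y, g X Y = g Y X)
    (hgnd : ∀ X : V, (∀ Y, g X Y = 0) → X = 0)
    (e : Module.Basis (Fin n) ℝ V) (ε : Fin n → ℝ)
    (hε : ∀ j, ε j = 1 ∨ ε j = -1)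
    (he : ∀ j k, g (e j) (e k) = if j = k then ε j else 0)
    (B : V →ₗ[ℝ] V →ₗ[ℝ] V →ₗ[ℝ] V →ₗ[ℝ] ℝ)
    (Bf : V → V → V → V → ℝ) (hBf : Bf = fun X₁ X₂ X₃ X₄ => B X₁ X₂ X₃ X₄)
    (hB1 : ∀ X₁ X₂ X₃ X₄, Bf X₁ X₂ X₃ X₄ = - Bf X₂ X₁ X₃ X₄)
    (hB2 : ∀ X₁ X₂ X₃ X₄, Bf X₁ X₂ X₃ X₄ = Bf X₃ X₄ X₁ X₂)
    (hB3 : ∀ X₁ X₂ X₃ X₄, Bf X₁ X₂ X₃ X₄ + Bf X₂ X₃ X₁ X₄ + Bf X₃ X₁ X₂ X₄ = 0)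
    (Ric : V → V → ℝ) (hRic : Ric = ricci ε (⇑e) Bf)
    (κ : ℝ) (hκ : κ = scal ε (⇑e) Bf)
    (Wl : V → V → V → V → ℝ) (hWl : Wl = weyl (fun X Y => g X Y) ε (⇑e) Bf)
    (φ μ η : ℝ) (hφ : φ ≠ 0)
    (hRoter : ∀ X₁ X₂ X₃ X₄, Bf X₁ X₂ X₃ X₄
      = (φ / 2) * KN Ric Ric X₁ X₂ X₃ X₄
        + μ * KN (fun X Y => g X Y) Ric X₁ X₂ X₃ X₄
        + (η / 2) * KN (fun X Y => g X Y) (fun X Y => g X Y) X₁ X₂ X₃ X₄)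
    (hRicne : ¬ ∀ X Y, Ric X Y = (κ / (n : ℝ)) * g X Y)
    (hWlne : ¬ ∀ X₁ X₂ X₃ X₄, Wl X₁ X₂ X₃ X₄ = 0)
    (𝒟 : V →ₗ[ℝ] V) (h𝒟 : ∀ X Y, g (𝒟 X) Y = Ric X Y)
    (α₁ α₂ : ℝ)
    (hα₁ : α₁ = κ + φ⁻¹ * (((n : ℝ) - 2) * μ - 1))
    (hα₂ : α₂ = φ⁻¹ * (μ * κ + ((n : ℝ) - 1) * η)) :
    (α₂ = (1 / (n : ℝ)) * (LinearMap.trace ℝ V (𝒟 ∘ₗ 𝒟) - α₁ * κ)) ∧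
    (∀ X Y,
      Ric (𝒟 X) Y - (1 / (n : ℝ)) * LinearMap.trace ℝ V (𝒟 ∘ₗ 𝒟) * g X Y
        = α₁ * (Ric X Y - (κ / (n : ℝ)) * g X Y)) ∧
    (∀ X Y,
      Ric (𝒟 (𝒟 X)) Y - (1 / (n : ℝ)) * LinearMap.trace ℝ V (𝒟 ∘ₗ 𝒟) * Ric X Y
        = α₁ * (Ric (𝒟 X) Y - (κ / (n : ℝ)) * Ric X Y)) :=
  statement16_general n hn g hgsymm hgnd e ε hε he Bf hB1 hB2 Ric hRic κ hκ φ μ η hφ hRoter 𝒟 h𝒟 α₁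
    α₂ hα₁ hα₂

end OVAff
end
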